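/- arXiv:1708.08502 — 3 statements merged into one kernel-verified Lean document; each statement's English description precedes it below -/
import Mathlib

section
/- Let G be a planar PCC graph and let σ be a face of G such that the multiset of vertices on the boundary of σ is not a set (i.e. some vertex occurs on the boundary of σ with multiplicity at least 2). Then 7 ≤ |σ| ≤ 11. The same conclusion holds if the multiset of edges on the boundary of σ is not a set. -/
/-!
We formalize finite graphs 2-cell embedded in the sphere via combinatorial maps
(rotation systems): a finite set of darts together with a vertex-rotation
permutation `σ` and a fixed-point-free edge involution `α`.  Vertices, edges
and faces are the orbits of `σ`, `α` and of the face permutation `φ = σ ∘ α`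
respectively; Euler's formula `#V - #E + #F = 2` says that the underlying
closed orientable surface is the sphere.
-/

/-- A finite combinatorial map (rotation system), encoding a finite graph
2-cell embedded in a closed orientable surface. -/
structure PlaneGraph where
  /-- the type of darts (oriented edges) -/
  D : Type
  fintypeD : Fintype D
  /-- the counterclockwise rotation of the darts around their base vertex -/
  σ : Equiv.Perm D
  /-- the involution sending a dart to the opposite dart of the same edge -/
  α : Equiv.Perm D
  α_invol : ∀ d, α (α d) = d
  α_fixfree : ∀ d, α d ≠ d

namespace PlaneGraph

variable (G : PlaneGraph)

instance : Fintype G.D := G.fintypeD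

/-- The face permutation. -/
def φ : Equiv.Perm G.D := G.σ * G.α

/-- Darts based at the same vertex, i.e. in the same `σ`-orbit. -/
def vSetoid : Setoid G.D :=
  ⟨G.σ.SameCycle, ⟨fun _ => Equiv.Perm.SameCycle.refl _ _,
    fun h => h.symm, fun h h' => h.trans h'⟩⟩

/-- Darts of the same edge, i.e. in the same `α`-orbit. -/
def eSetoid : Setoid G.D :=
  ⟨G.α.SameCycle, ⟨fun _ => Equiv.Perm.SameCycle.refl _ _,
    fun h => h.symm, fun h h' => h.trans h'⟩⟩

/-- Darts of the same face, i.e. in the same `φ`-orbit. -/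
def fSetoid : Setoid G.D :=
  ⟨G.φ.SameCycle, ⟨fun _ => Equiv.Perm.SameCycle.refl _ _,
    fun h => h.symm, fun h h' => h.trans h'⟩⟩

/-- The vertices of the graph. -/
def Vertex := Quotient G.vSetoid

/-- The edges of the graph. -/
def Edge := Quotient G.eSetoid

/-- The faces of the embedded graph. -/
def Face := Quotient G.fSetoid

noncomputable instance : Fintype G.Vertex :=
  @Quotient.fintype _ _ G.vSetoid (Classical.decRel _)

noncomputable instance : Fintype G.Edge :=
  @Quotient.fintype _ _ G.eSetoid (Classical.decRel _)

noncomputable instance : Fintype G.Face :=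
  @Quotient.fintype _ _ G.fSetoid (Classical.decRel _)

/-- The base vertex of a dart. -/
def vertexOf (d : G.D) : G.Vertex := Quotient.mk G.vSetoid d

/-- The edge underlying a dart. -/
def edgeOf (d : G.D) : G.Edge := Quotient.mk G.eSetoid d

/-- The face on the left of a dart. -/
def faceOf (d : G.D) : G.Face := Quotient.mk G.fSetoid d

open scoped Classical in
/-- The darts based at a given vertex. -/
noncomputable def dartsAt (v : G.Vertex) : Finset G.D :=
  Finset.univ.filter fun d => G.vertexOf d = v

open scoped Classical in
/-- The darts of a given face. -/
noncomputable def dartsOfFace (f : G.Face) : Finset G.D :=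
  Finset.univ.filter fun d => G.faceOf d = f

open scoped Classical in
/-- The darts of a given edge. -/
noncomputable def dartsOfEdge (e : G.Edge) : Finset G.D :=
  Finset.univ.filter fun d => G.edgeOf d = e

/-- The degree of a vertex. -/
noncomputable def degree (v : G.Vertex) : ℕ := (G.dartsAt v).card

/-- The size of a face: the number of its boundary edges, counted with
multiplicity. -/
noncomputable def faceSize (f : G.Face) : ℕ := (G.dartsOfFace f).card

/-- The multiset of faces incident to a vertex (with multiplicity). -/
noncomputable def facesAt (v : G.Vertex) : Multiset G.Face :=
  (G.dartsAt v).val.map G.faceOf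

/-- The face vector of a vertex: the multiset of the sizes of the faces
incident to it (with multiplicity). -/
noncomputable def faceVector (v : G.Vertex) : Multiset ℕ :=
  (G.dartsAt v).val.map fun d => G.faceSize (G.faceOf d)

/-- The multiset of the boundary vertices of a face (with multiplicity). -/
noncomputable def boundaryVertices (f : G.Face) : Multiset G.Vertex :=
  (G.dartsOfFace f).val.map G.vertexOf

/-- The multiset of the boundary edges of a face (with multiplicity). -/
noncomputable def boundaryEdges (f : G.Face) : Multiset G.Edge :=
  (G.dartsOfFace f).val.map G.edgeOf

/-- The side vector of an edge: the multiset of the sizes of the two faces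
lying on either side of it. -/
noncomputable def sideVector (e : G.Edge) : Multiset ℕ :=
  (G.dartsOfEdge e).val.map fun d => G.faceSize (G.faceOf d)

/-- The combinatorial curvature of a vertex:
`K(v) = 1 - deg(v)/2 + ∑_{σ ∈ F(v)} 1/|σ|`. -/
noncomputable def curvature (v : G.Vertex) : ℚ :=
  1 - (G.degree v : ℚ) / 2 + ∑ d ∈ G.dartsAt v, (1 : ℚ) / (G.faceSize (G.faceOf d))

/-- The graph is connected. -/
def Connected : Prop :=
  ∀ d d' : G.D, Relation.ReflTransGen (fun a b => G.σ a = b ∨ G.α a = b) d d'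

/-- The graph has no loops. -/
def Loopless : Prop := ∀ d : G.D, G.vertexOf (G.α d) ≠ G.vertexOf d

/-- The graph has no multiple edges: an edge is determined by its two
endpoints. -/
def NoMultiEdges : Prop :=
  ∀ d d' : G.D, G.vertexOf d = G.vertexOf d' →
    G.vertexOf (G.α d) = G.vertexOf (G.α d') → G.edgeOf d = G.edgeOf d'

/-- Euler's formula `#V - #E + #F = 2`: the graph is 2-cell embedded in the
sphere. -/
def IsSphere : Prop :=
  (Fintype.card G.Vertex : ℤ) - (Fintype.card G.Edge : ℤ) +
    (Fintype.card G.Face : ℤ) = 2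

/-- The multiset of the sizes of all faces of the graph. -/
noncomputable def allFaceSizes : Multiset ℕ :=
  (Finset.univ : Finset G.Face).val.map G.faceSize

/-- `G` is a prism of some order `N`: it has `2N` vertices, two faces of size
`N` and `N` faces of size 4, and every vertex is incident to faces of sizes
`4, 4, N`. -/
def IsPrism : Prop :=
  ∃ N : ℕ, Fintype.card G.Vertex = 2 * N ∧
    (∀ v : G.Vertex, G.faceVector v = {4, 4, N}) ∧
    G.allFaceSizes = Multiset.replicate N 4 + {N, N}

/-- `G` is an antiprism of some order `N`: it has `2N` vertices, two faces of
size `N` and `2N` faces of size 3, and every vertex is incident to faces of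
sizes `3, 3, 3, N`. -/
def IsAntiprism : Prop :=
  ∃ N : ℕ, Fintype.card G.Vertex = 2 * N ∧
    (∀ v : G.Vertex, G.faceVector v = {3, 3, 3, N}) ∧
    G.allFaceSizes = Multiset.replicate (2 * N) 3 + {N, N}

/-- A planar PCC graph: a finite simple connected planar graph, 2-cell
embedded in the sphere, which is not a prism or an antiprism, all of whose
vertices have degree at least 3 and strictly positive combinatorial
curvature. -/
def IsPCC : Prop :=
  G.Connected ∧ G.Loopless ∧ G.NoMultiEdges ∧ G.IsSphere ∧
    (∀ v : G.Vertex, 3 ≤ G.degree v) ∧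
    (∀ v : G.Vertex, 0 < G.curvature v) ∧
    ¬G.IsPrism ∧ ¬G.IsAntiprism

end PlaneGraph

/-!
Two distinct darts `d₁ ≠ d₂` of the face share their base vertex `v`; for a repeated edge take a
dart `x` with `α x` on the face, and `x`, `σ x = φ (α x)`. At `v` the face contributes `1/|σ|`
twice to the curvature and every other face at most `1/3`, so positivity gives
`|σ| (deg v - 2) < 12`, whence `|σ| ≤ 11`. Walking around the face from `d₁` to `d₂` and back takes
at least three steps each way, because the graph has no loops or multiple edges; so `|σ| ≥ 6`, and
`|σ| = 6` forces `d₂ = φ³ d₁`, `d₁ = φ³ d₂` and `deg v = 3`. Then one of the two darts is `σ` of the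
other, and `φ³ x = σ x` would turn the edge of `φ x` into a loop.
-/

open Finset

theorem Equiv.Perm.SameCycle.exists_pow_apply_eq_of_ne {β : Type*} [Fintype β]
    {p : Equiv.Perm β} {x y : β} {s : Finset β} (hs : ∀ z, z ∈ s ↔ p.SameCycle x z)
    (hxy : p.SameCycle x y) (hne : x ≠ y) :
    ∃ k l, 0 < k ∧ 0 < l ∧ k + l = #s ∧ (p ^ k) x = y ∧ (p ^ l) y = x := by
  classical
  have hx : p x ≠ x := fun hx => hne (hxy.eq_of_left hx)
  have hsupp : s = (p.cycleOf x).support := by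
    ext z
    rw [hs, Equiv.Perm.mem_support_cycleOf_iff' hx]
  obtain ⟨k, hks, rfl⟩ := hxy.exists_pow_eq_of_mem_support (Equiv.Perm.mem_support.2 hx)
  rw [← hsupp] at hks
  have hk : k ≠ 0 := by rintro rfl; simp at hne
  refine ⟨k, #s - k, by omega, by omega, by omega, Eq.refl _, ?_⟩
  have hper := p.pow_mod_card_support_cycleOf_self_apply #s x
  rw [← hsupp, Nat.mod_self, pow_zero, Equiv.Perm.one_apply] at hper
  rw [← Equiv.Perm.mul_apply, ← pow_add, Nat.sub_add_cancel hks.le, ← hper]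

namespace PlaneGraph

variable {G : PlaneGraph}

lemma φ_apply (x : G.D) : G.φ x = G.σ (G.α x) := rfl

lemma vertexOf_eq_vertexOf_iff {x y : G.D} : G.vertexOf x = G.vertexOf y ↔ G.σ.SameCycle x y :=
  ⟨Quotient.exact, fun h => Quotient.sound h⟩

lemma faceOf_eq_faceOf_iff {x y : G.D} : G.faceOf x = G.faceOf y ↔ G.φ.SameCycle x y :=
  ⟨Quotient.exact, fun h => Quotient.sound h⟩

lemma edgeOf_eq_edgeOf_iff {x y : G.D} : G.edgeOf x = G.edgeOf y ↔ G.α.SameCycle x y :=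
  ⟨Quotient.exact, fun h => Quotient.sound h⟩

lemma mem_dartsAt_vertexOf {x y : G.D} : y ∈ G.dartsAt (G.vertexOf x) ↔ G.σ.SameCycle x y := by
  simp [dartsAt, vertexOf_eq_vertexOf_iff, Equiv.Perm.sameCycle_comm]

lemma mem_dartsOfFace {f : G.Face} {d : G.D} : d ∈ G.dartsOfFace f ↔ G.faceOf d = f := by
  simp [dartsOfFace]

lemma mem_dartsOfFace_faceOf {x y : G.D} :
    y ∈ G.dartsOfFace (G.faceOf x) ↔ G.φ.SameCycle x y := by
  rw [mem_dartsOfFace, faceOf_eq_faceOf_iff, Equiv.Perm.sameCycle_comm]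

@[simp]
lemma vertexOf_σ (x : G.D) : G.vertexOf (G.σ x) = G.vertexOf x :=
  vertexOf_eq_vertexOf_iff.2 (Equiv.Perm.sameCycle_apply_left.2 (.refl _ _))

lemma vertexOf_φ (x : G.D) : G.vertexOf (G.φ x) = G.vertexOf (G.α x) :=
  vertexOf_σ _

lemma faceOf_φ (x : G.D) : G.faceOf (G.φ x) = G.faceOf x :=
  faceOf_eq_faceOf_iff.2 (Equiv.Perm.sameCycle_apply_left.2 (.refl _ _))

lemma eq_or_eq_α_of_edgeOf_eq {x y : G.D} (h : G.edgeOf x = G.edgeOf y) :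
    y = x ∨ y = G.α x := by
  have hsq : G.α ^ 2 = 1 := by ext d; simp [sq, G.α_invol]
  obtain ⟨i, hi, rfl⟩ := (edgeOf_eq_edgeOf_iff.1 h).exists_pow_eq'
  have : i < 2 := hi.trans_le (orderOf_le_of_pow_eq_one two_pos hsq)
  interval_cases i <;> simp

lemma σ_ne_self {x : G.D} (hdeg : 2 ≤ G.degree (G.vertexOf x)) : G.σ x ≠ x := by
  intro hx
  have hsub : G.dartsAt (G.vertexOf x) ⊆ {x} := fun y hy =>
    mem_singleton.2 ((mem_dartsAt_vertexOf.1 hy).eq_of_left hx).symm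
  have := card_le_card hsub
  rw [card_singleton] at this
  unfold degree at hdeg
  omega

lemma vertexOf_φ_ne (hL : G.Loopless) (x : G.D) : G.vertexOf (G.φ x) ≠ G.vertexOf x := by
  rw [vertexOf_φ]
  exact hL x

lemma vertexOf_φ_φ_ne (hL : G.Loopless) (hM : G.NoMultiEdges) (hσ : ∀ d, G.σ d ≠ d)
    (x : G.D) : G.vertexOf (G.φ (G.φ x)) ≠ G.vertexOf x := by
  intro h
  have hedge : G.edgeOf x = G.edgeOf (G.α (G.φ x)) :=
    hM _ _ (h.symm.trans (vertexOf_σ _)) (by rw [G.α_invol, vertexOf_φ])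
  rcases eq_or_eq_α_of_edgeOf_eq hedge with h' | h'
  · have : G.φ x = G.α x := by simpa [G.α_invol] using congrArg G.α h'
    exact hσ _ this
  · have : G.φ x = x := G.α.injective h'
    exact vertexOf_φ_ne hL x (by rw [this])

lemma vertexOf_φ_pow_ne (hL : G.Loopless) (hM : G.NoMultiEdges) (hσ : ∀ d, G.σ d ≠ d)
    (x : G.D) {k : ℕ} (hk : 0 < k) (hk2 : k ≤ 2) : G.vertexOf ((G.φ ^ k) x) ≠ G.vertexOf x := by
  interval_cases k
  · exact vertexOf_φ_ne hL x
  · exact vertexOf_φ_φ_ne hL hM hσ x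

lemma φ_pow_three_ne_σ (hL : G.Loopless) (x : G.D) : (G.φ ^ 3) x ≠ G.σ x := by
  intro h
  have h1 : G.α (G.φ (G.φ x)) = x := G.σ.injective h
  have h2 : G.φ (G.φ x) = G.α x := by simpa [G.α_invol] using congrArg G.α h1
  exact hL (G.φ x) (by rw [vertexOf_φ x, ← h2, vertexOf_φ])

lemma three_le_faceSize (hL : G.Loopless) (hM : G.NoMultiEdges) (hσ : ∀ d, G.σ d ≠ d)
    (x : G.D) : 3 ≤ G.faceSize (G.faceOf x) := by
  refine two_lt_card_iff.2 ⟨x, G.φ x, G.φ (G.φ x), mem_dartsOfFace.2 rfl,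
    mem_dartsOfFace.2 (faceOf_φ x), mem_dartsOfFace.2 ((faceOf_φ _).trans (faceOf_φ x)),
    ?_, ?_, ?_⟩
  · exact fun h => vertexOf_φ_ne hL x (congrArg G.vertexOf h.symm)
  · exact fun h => vertexOf_φ_φ_ne hL hM hσ x (congrArg G.vertexOf h.symm)
  · exact fun h => vertexOf_φ_ne hL (G.φ x) (congrArg G.vertexOf h.symm)

lemma curvature_le {d₁ d₂ : G.D} (hsize : ∀ d, 3 ≤ G.faceSize (G.faceOf d)) (hne : d₁ ≠ d₂)
    (hv : G.vertexOf d₂ = G.vertexOf d₁) (hf : G.faceOf d₂ = G.faceOf d₁) :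
    G.curvature (G.vertexOf d₁) ≤ 1 - (G.degree (G.vertexOf d₁) : ℚ) / 2 +
      ((G.degree (G.vertexOf d₁) : ℚ) - 2) / 3 + 2 / G.faceSize (G.faceOf d₁) := by
  classical
  have hsub : {d₁, d₂} ⊆ G.dartsAt (G.vertexOf d₁) := by
    simp only [insert_subset_iff, singleton_subset_iff, mem_dartsAt_vertexOf]
    exact ⟨.refl _ _, vertexOf_eq_vertexOf_iff.1 hv.symm⟩
  have hcard : (#(G.dartsAt (G.vertexOf d₁) \ {d₁, d₂}) : ℚ) = G.degree (G.vertexOf d₁) - 2 := by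
    have h2 := card_le_card hsub
    rw [card_pair hne] at h2
    rw [card_sdiff_of_subset hsub, card_pair hne, Nat.cast_sub h2, Nat.cast_two, degree]
  have hrest : ∑ d ∈ G.dartsAt (G.vertexOf d₁) \ {d₁, d₂}, (1 : ℚ) / G.faceSize (G.faceOf d) ≤
      #(G.dartsAt (G.vertexOf d₁) \ {d₁, d₂}) • (1 / 3) :=
    sum_le_card_nsmul _ _ _ fun d _ => by
      gcongr
      exact_mod_cast hsize d
  rw [nsmul_eq_mul, hcard] at hrest
  rw [curvature, ← sum_sdiff hsub, sum_pair hne, hf, ← add_div, one_add_one_eq_two]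
  linarith

lemma faceSize_mul_degree_sub_two_lt_twelve {d₁ d₂ : G.D}
    (hsize : ∀ d, 3 ≤ G.faceSize (G.faceOf d)) (hcurv : 0 < G.curvature (G.vertexOf d₁))
    (hne : d₁ ≠ d₂) (hv : G.vertexOf d₂ = G.vertexOf d₁) (hf : G.faceOf d₂ = G.faceOf d₁) :
    G.faceSize (G.faceOf d₁) * (G.degree (G.vertexOf d₁) - 2) < 12 := by
  have hpos := hcurv.trans_le (curvature_le hsize hne hv hf)
  have hn : (0 : ℚ) < G.faceSize (G.faceOf d₁) := Nat.cast_pos.2 (by linarith [hsize d₁])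
  obtain hD | hD := lt_or_ge (G.degree (G.vertexOf d₁)) 2
  · simp [Nat.sub_eq_zero_of_le hD.le]
  qify [hD]
  have hscale : (1 - (G.degree (G.vertexOf d₁) : ℚ) / 2 + ((G.degree (G.vertexOf d₁) : ℚ) - 2) / 3 +
      2 / G.faceSize (G.faceOf d₁)) * G.faceSize (G.faceOf d₁) =
      (12 - G.faceSize (G.faceOf d₁) * ((G.degree (G.vertexOf d₁) : ℚ) - 2)) / 6 := by
    field_simp
    ring
  linarith [hscale ▸ mul_pos hpos hn]

lemma faceSize_eq_six_of_le_six (hL : G.Loopless) (hM : G.NoMultiEdges) (hσ : ∀ d, G.σ d ≠ d)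
    {d₁ d₂ : G.D} (hne : d₁ ≠ d₂) (hv : G.vertexOf d₂ = G.vertexOf d₁)
    (hf : G.faceOf d₂ = G.faceOf d₁) (h6 : G.faceSize (G.faceOf d₁) ≤ 6) :
    G.faceSize (G.faceOf d₁) = 6 ∧ (G.φ ^ 3) d₁ = d₂ ∧ (G.φ ^ 3) d₂ = d₁ := by
  obtain ⟨k, l, hk, hl, hkl, hkd, hld⟩ := Equiv.Perm.SameCycle.exists_pow_apply_eq_of_ne
    (fun _ => mem_dartsOfFace_faceOf) (faceOf_eq_faceOf_iff.1 hf.symm) hne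
  have hk3 : 3 ≤ k := by
    by_contra! hk3
    exact vertexOf_φ_pow_ne hL hM hσ d₁ hk (by omega) (by rw [hkd, hv])
  have hl3 : 3 ≤ l := by
    by_contra! hl3
    exact vertexOf_φ_pow_ne hL hM hσ d₂ hl (by omega) (by rw [hld, hv])
  rw [faceSize] at h6 ⊢
  obtain ⟨rfl, rfl⟩ : k = 3 ∧ l = 3 := by omega
  exact ⟨by omega, hkd, hld⟩

lemma degree_ne_three_of_φ_pow_three (hL : G.Loopless) {d₁ d₂ : G.D} (hne : d₁ ≠ d₂)
    (hv : G.vertexOf d₂ = G.vertexOf d₁) (h₁₂ : (G.φ ^ 3) d₁ = d₂) (h₂₁ : (G.φ ^ 3) d₂ = d₁) :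
    G.degree (G.vertexOf d₁) ≠ 3 := by
  intro h3
  obtain ⟨k, l, hk, hl, hkl, hkd, hld⟩ := Equiv.Perm.SameCycle.exists_pow_apply_eq_of_ne
    (fun _ => mem_dartsAt_vertexOf) (vertexOf_eq_vertexOf_iff.1 hv.symm) hne
  rw [← degree, h3] at hkl
  obtain rfl | rfl : k = 1 ∨ l = 1 := by omega
  · exact φ_pow_three_ne_σ hL d₁ (by rw [h₁₂, ← hkd, pow_one])
  · exact φ_pow_three_ne_σ hL d₂ (by rw [h₂₁, ← hld, pow_one])

lemma exists_ne_of_not_nodup_boundaryVertices {f : G.Face}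
    (h : ¬(G.boundaryVertices f).Nodup) : ∃ d₁ d₂, d₁ ≠ d₂ ∧ G.faceOf d₁ = f ∧
      G.faceOf d₂ = f ∧ G.vertexOf d₂ = G.vertexOf d₁ := by
  rw [boundaryVertices, Multiset.nodup_map_iff_inj_on (G.dartsOfFace f).nodup] at h
  push Not at h
  obtain ⟨x, hx, y, hy, hxy, hne⟩ := h
  exact ⟨x, y, hne, mem_dartsOfFace.1 hx, mem_dartsOfFace.1 hy, hxy.symm⟩

lemma exists_ne_of_not_nodup_boundaryEdges (hσ : ∀ d, G.σ d ≠ d) {f : G.Face}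
    (h : ¬(G.boundaryEdges f).Nodup) : ∃ d₁ d₂, d₁ ≠ d₂ ∧ G.faceOf d₁ = f ∧
      G.faceOf d₂ = f ∧ G.vertexOf d₂ = G.vertexOf d₁ := by
  rw [boundaryEdges, Multiset.nodup_map_iff_inj_on (G.dartsOfFace f).nodup] at h
  push Not at h
  obtain ⟨x, hx, y, hy, hxy, hne⟩ := h
  obtain rfl : y = G.α x := (eq_or_eq_α_of_edgeOf_eq hxy).resolve_left hne.symm
  refine ⟨x, G.σ x, (hσ x).symm, mem_dartsOfFace.1 hx, ?_, vertexOf_σ x⟩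
  -- `σ x = φ (α x)` follows `α x` along the face.
  rw [← mem_dartsOfFace.1 hy, ← faceOf_φ (G.α x), φ_apply, G.α_invol]

end PlaneGraph

/-- If the multiset of boundary vertices of a face of a
planar PCC graph is not a set, or if the multiset of its boundary edges is
not a set, then the size of the face is between 7 and 11. -/
theorem pcc_face_with_repeated_boundary (G : PlaneGraph) (hG : G.IsPCC)
    (f : G.Face)
    (h : ¬(G.boundaryVertices f).Nodup ∨ ¬(G.boundaryEdges f).Nodup) :
    7 ≤ G.faceSize f ∧ G.faceSize f ≤ 11 := by
  obtain ⟨-, hL, hM, -, hdeg, hcurv, -, -⟩ := hG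
  have hσ : ∀ d, G.σ d ≠ d := fun d => PlaneGraph.σ_ne_self ((hdeg _).trans' (by norm_num))
  obtain ⟨d₁, d₂, hne, rfl, hf, hv⟩ := h.elim PlaneGraph.exists_ne_of_not_nodup_boundaryVertices
    (PlaneGraph.exists_ne_of_not_nodup_boundaryEdges hσ)
  have hsize := PlaneGraph.three_le_faceSize hL hM hσ
  have hbound := PlaneGraph.faceSize_mul_degree_sub_two_lt_twelve hsize (hcurv _) hne hv hf
  have hD := hdeg (G.vertexOf d₁)
  constructor
  · by_contra! h7
    obtain ⟨h6, h₁₂, h₂₁⟩ := PlaneGraph.faceSize_eq_six_of_le_six hL hM hσ hne hv hf (by omega)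
    rw [h6] at hbound
    exact PlaneGraph.degree_ne_three_of_φ_pow_three hL hne hv h₁₂ h₂₁ (by omega)
  · exact Nat.le_of_lt_succ ((Nat.le_mul_of_pos_right _ (by omega)).trans_lt hbound)
end

section
/- Let G be a planar PCC graph and let σ, σ', κ be faces of G with |σ| ≥ 20, |σ'| ≥ 20 and |κ| ≤ 6. Let e and e' be boundary edges of κ such that e is a boundary edge of σ and e' is a boundary edge of σ'. Then σ = σ' and e = e'. -/
/-!
Call a face large if it has at least 20 sides. Positive curvature makes the faces around a vertex
small on average: no vertex lies twice on large faces, a vertex on a large face and on a face with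
at least 4 sides has degree 3, and then its two other faces are a triangle and something else, or
two squares. In particular two consecutive sides of any face never both border large faces.

Let `d ≠ d'` be sides of the small face `κ` bordering large faces, at distance `j` along `κ`.
Distance one is excluded by the remark above. At distance two the middle side of `κ` borders a
triangle whose other two sides border the two large faces consecutively, unless `κ` is a square.
In that case squares propagate all the way around the large face: the graph is a ring of `n`
squares between two `n`-gons, every vertex has curvature `1/n`, and Gauss–Bonnet gives `2n`
vertices; so the two `n`-gons are distinct and the graph is a prism. At distance three `κ` is a hexagon, and a local analysis at
each of its two middle vertices shows that the boundary walks of the two large faces join up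
within four steps on either side, so the large face has at most eight sides.
-/

theorem Equiv.Perm.card_eq_minimalPeriod_of_mem_iff_sameCycle {α : Type*} [Finite α]
    {π : Equiv.Perm α} {x : α} {s : Finset α} (hs : ∀ y, y ∈ s ↔ π.SameCycle x y) :
    s.card = Function.minimalPeriod π x := by
  classical
  have hpos : 0 < Function.minimalPeriod π x :=
    Function.minimalPeriod_pos_of_mem_periodicPts (π.injective.mem_periodicPts x)
  have hs' : s = (Finset.range (Function.minimalPeriod π x)).image (π^[·] x) := by
    ext y
    simp only [hs, Finset.mem_image, Finset.mem_range]
    constructor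
    · intro h
      obtain ⟨i, rfl⟩ := h.exists_nat_pow_eq
      exact ⟨i % _, Nat.mod_lt _ hpos, by rw [Function.iterate_mod_minimalPeriod_eq]; rfl⟩
    · rintro ⟨i, -, rfl⟩
      exact ⟨i, by rw [← Equiv.Perm.coe_pow]; rfl⟩
  rw [hs', Finset.card_image_of_injOn, Finset.card_range]
  intro i hi j hj hij
  exact Function.iterate_injOn_Iio_minimalPeriod (Finset.mem_range.1 hi) (Finset.mem_range.1 hj) hij

theorem one_div_natCast_le_one_div {m n : ℕ} (hm : 0 < m) (h : m ≤ n) :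
    (1 : ℚ) / n ≤ 1 / m :=
  one_div_le_one_div_of_le (by exact_mod_cast hm) (by exact_mod_cast h)

namespace PlaneGraph

variable {G : PlaneGraph}

/-! ### Orbits of the rotation system -/

variable (G) in
noncomputable def faceSizeAt (d : G.D) : ℕ := G.faceSize (G.faceOf d)

variable (G) in
noncomputable def degreeAt (d : G.D) : ℕ := G.degree (G.vertexOf d)

theorem alpha_alpha (d : G.D) : G.α (G.α d) = d := G.α_invol d

theorem sigma_alpha (d : G.D) : G.σ (G.α d) = G.φ d := rfl

theorem phi_alpha (d : G.D) : G.φ (G.α d) = G.σ d := congrArg G.σ (alpha_alpha d)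

theorem vertexOf_eq_iff {d d' : G.D} : G.vertexOf d = G.vertexOf d' ↔ G.σ.SameCycle d d' :=
  Quotient.eq

theorem faceOf_eq_iff {d d' : G.D} : G.faceOf d = G.faceOf d' ↔ G.φ.SameCycle d d' :=
  Quotient.eq

theorem edgeOf_eq_iff {d d' : G.D} : G.edgeOf d = G.edgeOf d' ↔ d' = d ∨ d' = G.α d := by
  have hpow : ∀ n : ℕ, (G.α ^ n) d = d ∨ (G.α ^ n) d = G.α d := by
    intro n
    induction n with
    | zero => exact Or.inl rfl
    | succ n ih =>
      rw [pow_succ', Equiv.Perm.mul_apply]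
      rcases ih with h | h <;> rw [h]
      exacts [Or.inr rfl, Or.inl (alpha_alpha d)]
  refine ⟨fun h => ?_, ?_⟩
  · obtain ⟨n, rfl⟩ := (Quotient.exact h : G.α.SameCycle d d').exists_nat_pow_eq
    exact hpow n
  · rintro (rfl | rfl)
    exacts [rfl, Quotient.sound (Equiv.Perm.SameCycle.refl _ _ |>.apply_right)]

@[simp] theorem vertexOf_sigma (d : G.D) : G.vertexOf (G.σ d) = G.vertexOf d :=
  Quotient.sound (Equiv.Perm.SameCycle.refl _ _).apply_left

@[simp] theorem faceOf_phi (d : G.D) : G.faceOf (G.φ d) = G.faceOf d :=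
  Quotient.sound (Equiv.Perm.SameCycle.refl _ _).apply_left

theorem vertexOf_phi (d : G.D) : G.vertexOf (G.φ d) = G.vertexOf (G.α d) := vertexOf_sigma _

theorem faceOf_alpha (d : G.D) : G.faceOf (G.α d) = G.faceOf (G.σ d) := by
  rw [← phi_alpha, faceOf_phi]

@[simp] theorem faceSizeAt_phi (d : G.D) : G.faceSizeAt (G.φ d) = G.faceSizeAt d := by
  rw [faceSizeAt, faceOf_phi, faceSizeAt]

theorem faceSizeAt_alpha (d : G.D) : G.faceSizeAt (G.α d) = G.faceSizeAt (G.σ d) := by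
  rw [faceSizeAt, faceOf_alpha, faceSizeAt]

@[simp] theorem degreeAt_sigma (d : G.D) : G.degreeAt (G.σ d) = G.degreeAt d := by
  rw [degreeAt, vertexOf_sigma, degreeAt]

theorem faceSizeAt_congr {x y : G.D} (h : G.faceOf x = G.faceOf y) :
    G.faceSizeAt x = G.faceSizeAt y := by
  rw [faceSizeAt, h, faceSizeAt]

theorem faceOf_iterate_phi (n : ℕ) (d : G.D) : G.faceOf (G.φ^[n] d) = G.faceOf d := by
  induction n with
  | zero => rfl
  | succ n ih => rw [Function.iterate_succ_apply', faceOf_phi, ih]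

theorem faceSizeAt_eq_minimalPeriod (d : G.D) :
    G.faceSizeAt d = Function.minimalPeriod G.φ d :=
  Equiv.Perm.card_eq_minimalPeriod_of_mem_iff_sameCycle fun y => by
    classical
    simp only [dartsOfFace, Finset.mem_filter, Finset.mem_univ, true_and, faceOf_eq_iff]
    exact ⟨fun h => h.symm, fun h => h.symm⟩

theorem degreeAt_eq_minimalPeriod (d : G.D) :
    G.degreeAt d = Function.minimalPeriod G.σ d :=
  Equiv.Perm.card_eq_minimalPeriod_of_mem_iff_sameCycle fun y => by
    classical
    simp only [dartsAt, Finset.mem_filter, Finset.mem_univ, true_and, vertexOf_eq_iff]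
    exact ⟨fun h => h.symm, fun h => h.symm⟩

theorem iterate_faceSizeAt (d : G.D) : G.φ^[G.faceSizeAt d] d = d := by
  rw [faceSizeAt_eq_minimalPeriod]; exact Function.iterate_minimalPeriod

theorem iterate_degreeAt (d : G.D) : G.σ^[G.degreeAt d] d = d := by
  rw [degreeAt_eq_minimalPeriod]; exact Function.iterate_minimalPeriod

theorem iterate_phi_of_faceSizeAt_eq {d : G.D} {n : ℕ} (h : G.faceSizeAt d = n) :
    G.φ^[n] d = d :=
  h ▸ iterate_faceSizeAt d

theorem iterate_sigma_of_degreeAt_eq {d : G.D} {n : ℕ} (h : G.degreeAt d = n) :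
    G.σ^[n] d = d :=
  h ▸ iterate_degreeAt d

theorem phi_phi_phi_of_faceSizeAt_eq_three {d : G.D} (h : G.faceSizeAt d = 3) :
    G.φ (G.φ (G.φ d)) = d :=
  iterate_phi_of_faceSizeAt_eq h

theorem sigma_sigma_sigma_of_degreeAt_eq_three {d : G.D} (h : G.degreeAt d = 3) :
    G.σ (G.σ (G.σ d)) = d :=
  iterate_sigma_of_degreeAt_eq h

theorem sigma_sigma_eq_alpha_symm_phi {s : G.D} (h : G.degreeAt s = 3) :
    G.σ (G.σ s) = G.α (G.φ.symm s) :=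
  G.σ.injective (by
    rw [sigma_alpha, Equiv.apply_symm_apply]; exact sigma_sigma_sigma_of_degreeAt_eq_three h)

theorem faceSizeAt_le_of_iterate {d : G.D} {n : ℕ} (hn : 0 < n) (h : G.φ^[n] d = d) :
    G.faceSizeAt d ≤ n := by
  rw [faceSizeAt_eq_minimalPeriod]; exact Function.IsPeriodicPt.minimalPeriod_le hn h

theorem degreeAt_le_of_iterate {d : G.D} {n : ℕ} (hn : 0 < n) (h : G.σ^[n] d = d) :
    G.degreeAt d ≤ n := by
  rw [degreeAt_eq_minimalPeriod]; exact Function.IsPeriodicPt.minimalPeriod_le hn h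

theorem faceSizeAt_pos (d : G.D) : 0 < G.faceSizeAt d := by
  rw [faceSizeAt_eq_minimalPeriod]
  exact Function.minimalPeriod_pos_of_mem_periodicPts (G.φ.injective.mem_periodicPts d)

theorem exists_iterate_phi_eq {d d' : G.D} (h : G.faceOf d = G.faceOf d') :
    ∃ i < G.faceSizeAt d, G.φ^[i] d = d' := by
  obtain ⟨i, rfl⟩ := (faceOf_eq_iff.1 h).exists_nat_pow_eq
  refine ⟨i % G.faceSizeAt d, Nat.mod_lt _ (faceSizeAt_pos d), ?_⟩
  rw [faceSizeAt_eq_minimalPeriod, Function.iterate_mod_minimalPeriod_eq]; rfl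

theorem exists_iterate_sigma_eq {d d' : G.D} (h : G.vertexOf d = G.vertexOf d') :
    ∃ i < G.degreeAt d, G.σ^[i] d = d' := by
  obtain ⟨i, rfl⟩ := (vertexOf_eq_iff.1 h).exists_nat_pow_eq
  have hpos : 0 < G.degreeAt d := by
    rw [degreeAt_eq_minimalPeriod]
    exact Function.minimalPeriod_pos_of_mem_periodicPts (G.σ.injective.mem_periodicPts d)
  refine ⟨i % G.degreeAt d, Nat.mod_lt _ hpos, ?_⟩
  rw [degreeAt_eq_minimalPeriod, Function.iterate_mod_minimalPeriod_eq]; rfl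

theorem mem_boundaryEdges {f : G.Face} {e : G.Edge} :
    e ∈ G.boundaryEdges f ↔ ∃ d, G.faceOf d = f ∧ G.edgeOf d = e := by
  classical
  simp [boundaryEdges, dartsOfFace]

theorem faceOf_alpha_eq_of_edgeOf_mem {d : G.D} {f : G.Face} (he : G.edgeOf d ∈ G.boundaryEdges f)
    (hne : G.faceOf d ≠ f) : G.faceOf (G.α d) = f := by
  obtain ⟨x, rfl, hx⟩ := mem_boundaryEdges.1 he
  rcases edgeOf_eq_iff.1 hx.symm with rfl | rfl
  exacts [absurd rfl hne, rfl]

/-! ### Vertex rotations and global counts -/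

open scoped Classical in
theorem dartsAt_vertexOf (s : G.D) :
    G.dartsAt (G.vertexOf s) = (Finset.range (G.degreeAt s)).image (G.σ^[·] s) := by
  ext y
  simp only [dartsAt, Finset.mem_filter, Finset.mem_univ, true_and, Finset.mem_image,
    Finset.mem_range]
  constructor
  · exact fun h => exists_iterate_sigma_eq h.symm
  · rintro ⟨i, -, rfl⟩
    induction i with
    | zero => rfl
    | succ i ih => rw [Function.iterate_succ_apply', vertexOf_sigma, ih]

theorem injOn_iterate_sigma (s : G.D) :
    Set.InjOn (G.σ^[·] s) (Finset.range (G.degreeAt s)) := by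
  intro i hi j hj hij
  rw [degreeAt_eq_minimalPeriod] at hi hj
  exact Function.iterate_injOn_Iio_minimalPeriod (Finset.mem_range.1 hi) (Finset.mem_range.1 hj) hij

open scoped Classical in
theorem curvature_vertexOf (s : G.D) :
    G.curvature (G.vertexOf s) = 1 - (G.degreeAt s : ℚ) / 2 +
      ∑ i ∈ Finset.range (G.degreeAt s), (1 : ℚ) / G.faceSizeAt (G.σ^[i] s) := by
  rw [curvature, dartsAt_vertexOf, Finset.sum_image (injOn_iterate_sigma s)]
  rfl

open scoped Classical in
theorem faceVector_vertexOf (s : G.D) :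
    G.faceVector (G.vertexOf s) =
      (Multiset.range (G.degreeAt s)).map fun i => G.faceSizeAt (G.σ^[i] s) := by
  rw [faceVector, dartsAt_vertexOf, Finset.image_val_of_injOn (injOn_iterate_sigma s),
    Multiset.map_map]
  rfl

theorem card_faceVector (v : G.Vertex) : Multiset.card (G.faceVector v) = G.degree v :=
  Multiset.card_map _ _

theorem curvature_eq_sum_faceVector (v : G.Vertex) :
    G.curvature v = 1 - (Multiset.card (G.faceVector v) : ℚ) / 2 +
      ((G.faceVector v).map fun k : ℕ => (1 : ℚ) / k).sum := by
  rw [curvature, card_faceVector, Finset.sum_eq_multiset_sum, faceVector, Multiset.map_map]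
  rfl

theorem sum_degree : ∑ v, G.degree v = Fintype.card G.D := by
  classical
  exact (Finset.card_eq_sum_card_fiberwise fun _ _ => Finset.mem_univ _).symm

theorem sum_faceSize : ∑ f, G.faceSize f = Fintype.card G.D := by
  classical
  exact (Finset.card_eq_sum_card_fiberwise fun _ _ => Finset.mem_univ _).symm

theorem card_darts_eq_two_mul_card_edge : Fintype.card G.D = 2 * Fintype.card G.Edge := by
  classical
  rw [← Finset.card_univ, Finset.card_eq_sum_card_fiberwise (f := G.edgeOf)
    (t := Finset.univ) fun _ _ => Finset.mem_univ _, mul_comm, ← smul_eq_mul, ← Finset.card_univ,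
    ← Finset.sum_const]
  refine Finset.sum_congr rfl fun e _ => ?_
  induction e using Quotient.ind with
  | _ d =>
    rw [show Finset.univ.filter (fun x => G.edgeOf x = Quotient.mk _ d) = {d, G.α d} by
      ext x
      simp only [Finset.mem_filter, Finset.mem_univ, true_and, Finset.mem_insert,
        Finset.mem_singleton]
      exact eq_comm.trans edgeOf_eq_iff]
    exact Finset.card_pair (G.α_fixfree d).symm

theorem sum_one_div_faceSizeAt : ∑ d, (1 : ℚ) / G.faceSizeAt d = Fintype.card G.Face := by
  classical
  rw [← Finset.sum_fiberwise Finset.univ G.faceOf, Fintype.card_eq_sum_ones, Nat.cast_sum]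
  refine Finset.sum_congr rfl fun f _ => ?_
  induction f using Quotient.ind with
  | _ d =>
    have hpos : (0 : ℚ) < G.faceSizeAt d := by exact_mod_cast faceSizeAt_pos d
    rw [Finset.sum_congr rfl fun x hx => by rw [faceSizeAt, (Finset.mem_filter.1 hx).2],
      Finset.sum_const, nsmul_eq_mul]
    change (G.faceSizeAt d : ℚ) * (1 / G.faceSizeAt d) = _
    field_simp
    simp

theorem sum_curvature (h : G.IsSphere) : ∑ v, G.curvature v = 2 := by
  classical
  have hdeg : ∑ v, (G.degree v : ℚ) = 2 * Fintype.card G.Edge := by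
    exact_mod_cast sum_degree.trans card_darts_eq_two_mul_card_edge
  have hface : ∑ v, ∑ d ∈ G.dartsAt v, (1 : ℚ) / G.faceSizeAt d = Fintype.card G.Face :=
    (Finset.sum_fiberwise Finset.univ G.vertexOf _).trans sum_one_div_faceSizeAt
  have hχ : (Fintype.card G.Vertex : ℚ) - Fintype.card G.Edge + Fintype.card G.Face = 2 := by
    have h' : (Fintype.card G.Vertex : ℤ) - Fintype.card G.Edge + Fintype.card G.Face = 2 := h
    exact_mod_cast h'
  simp only [curvature, Finset.sum_add_distrib, Finset.sum_sub_distrib, ← Finset.sum_div,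
    Finset.sum_const, Finset.card_univ, nsmul_eq_mul, mul_one]
  rw [hdeg]
  change _ + ∑ v, ∑ d ∈ G.dartsAt v, (1 : ℚ) / G.faceSizeAt d = _
  rw [hface]
  linarith

theorem isPrism_of_faceVector_eq {n : ℕ} (hV : Fintype.card G.Vertex = 2 * n)
    (hvec : ∀ v, G.faceVector v = {4, 4, n}) {f₁ f₂ : G.Face} (hne : f₁ ≠ f₂)
    (h₁ : G.faceSize f₁ = n) (h₂ : G.faceSize f₂ = n)
    (hsq : ∀ f, f ≠ f₁ → f ≠ f₂ → G.faceSize f = 4) : G.IsPrism := by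
  classical
  set A := (Finset.univ.erase f₁).erase f₂
  have hval : (Finset.univ : Finset G.Face).val = f₁ ::ₘ f₂ ::ₘ A.val := by
    rw [Finset.erase_val, Multiset.cons_erase (Finset.mem_erase.2 ⟨hne.symm, Finset.mem_univ _⟩),
      Finset.erase_val, Multiset.cons_erase (Finset.mem_univ _)]
  have hA : A.val.map G.faceSize = Multiset.replicate A.card 4 := by
    rw [Multiset.map_congr rfl fun f hf => hsq f (Finset.ne_of_mem_erase
      (Finset.mem_of_mem_erase hf)) (Finset.ne_of_mem_erase hf), Multiset.map_const']
    rfl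
  have hsizes : G.allFaceSizes = n ::ₘ n ::ₘ Multiset.replicate A.card 4 := by
    rw [allFaceSizes, hval, Multiset.map_cons, Multiset.map_cons, hA, h₁, h₂]
  have hcount : n + n + A.card * 4 = 6 * n := by
    have hdeg : ∀ v, G.degree v = 3 := fun v => by rw [← card_faceVector, hvec]; rfl
    have := (Finset.sum_eq_multiset_sum Finset.univ G.faceSize).symm.trans
      (sum_faceSize.trans (sum_degree (G := G)).symm)
    rw [← allFaceSizes, hsizes, Finset.sum_congr rfl fun v _ => hdeg v, Finset.sum_const,
      Finset.card_univ, hV] at this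
    simp only [Multiset.sum_cons, Multiset.sum_replicate, smul_eq_mul] at this
    linarith
  refine ⟨n, hV, hvec, ?_⟩
  rw [hsizes, show A.card = n by omega, Multiset.insert_eq_cons, Multiset.add_cons, add_comm,
    Multiset.singleton_add]

/-! ### Local consequences of positive curvature -/

theorem IsPCC.curvature_pos (hG : G.IsPCC) (v : G.Vertex) : 0 < G.curvature v :=
  hG.2.2.2.2.2.1 v

theorem IsPCC.three_le_degreeAt (hG : G.IsPCC) (d : G.D) : 3 ≤ G.degreeAt d :=
  hG.2.2.2.2.1 _

theorem IsPCC.sigma_ne (hG : G.IsPCC) (d : G.D) : G.σ d ≠ d := fun h => by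
  have := degreeAt_le_of_iterate one_pos h
  have := hG.three_le_degreeAt d
  omega

theorem IsPCC.sigma_sigma_ne (hG : G.IsPCC) (d : G.D) : G.σ (G.σ d) ≠ d := fun h => by
  have := degreeAt_le_of_iterate two_pos h
  have := hG.three_le_degreeAt d
  omega

theorem IsPCC.vertexOf_alpha_ne (hG : G.IsPCC) (d : G.D) : G.vertexOf (G.α d) ≠ G.vertexOf d :=
  hG.2.1 d

theorem IsPCC.phi_ne (hG : G.IsPCC) (d : G.D) : G.φ d ≠ d := fun h =>
  hG.vertexOf_alpha_ne d (by rw [← vertexOf_phi, h])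

theorem IsPCC.phi_phi_ne (hG : G.IsPCC) (d : G.D) : G.φ (G.φ d) ≠ d := fun h => by
  have hsimple : G.NoMultiEdges := hG.2.2.1
  have hedge : G.edgeOf d = G.edgeOf (G.α (G.φ d)) :=
    hsimple _ _ (by rw [← vertexOf_phi, h]) (by rw [alpha_alpha, vertexOf_phi])
  rcases edgeOf_eq_iff.1 hedge with h' | h'
  · exact hG.sigma_ne (G.α d) (G.α.injective (by rw [sigma_alpha, alpha_alpha, h']))
  · exact hG.phi_ne d (G.α.injective h')

theorem IsPCC.three_le_faceSizeAt (hG : G.IsPCC) (d : G.D) : 3 ≤ G.faceSizeAt d := by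
  have hfix := iterate_faceSizeAt d
  have := faceSizeAt_pos d
  by_contra hlt
  interval_cases h : G.faceSizeAt d
  exacts [hG.phi_ne d hfix, hG.phi_phi_ne d hfix]

/- Positive curvature at `v`, where each dart outside `B` is bounded by a triangle. -/
theorem IsPCC.degree_div_six_lt (hG : G.IsPCC) {v : G.Vertex} {B : Finset G.D}
    (hB : B ⊆ G.dartsAt v) :
    (G.degree v : ℚ) / 6 < 1 + ∑ d ∈ B, ((1 : ℚ) / G.faceSizeAt d - 1 / 3) := by
  classical
  have hcurv : 0 < G.curvature v := hG.curvature_pos v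
  have hrest : ∑ d ∈ G.dartsAt v \ B, (1 : ℚ) / G.faceSizeAt d ≤
      (G.dartsAt v \ B).card * (1 / 3) := by
    rw [← nsmul_eq_mul]
    exact Finset.sum_le_card_nsmul _ _ _ fun d _ =>
      (one_div_natCast_le_one_div (by norm_num) (hG.three_le_faceSizeAt d)).trans_eq (by norm_num)
  have hcard : ((G.dartsAt v \ B).card : ℚ) = G.degree v - B.card := by
    rw [Finset.card_sdiff_of_subset hB, Nat.cast_sub (Finset.card_le_card hB)]
    rfl
  rw [curvature, ← Finset.sum_sdiff hB] at hcurv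
  rw [Finset.sum_sub_distrib, Finset.sum_const, nsmul_eq_mul]
  change 0 < _ - _ + (∑ d ∈ G.dartsAt v \ B, (1 : ℚ) / G.faceSizeAt d +
    ∑ d ∈ B, (1 : ℚ) / G.faceSizeAt d) at hcurv
  rw [hcard] at hrest
  linarith

theorem IsPCC.eq_of_vertexOf_eq_of_large (hG : G.IsPCC) {x y : G.D}
    (hv : G.vertexOf x = G.vertexOf y) (hx : 20 ≤ G.faceSizeAt x) (hy : 20 ≤ G.faceSizeAt y) :
    x = y := by
  classical
  by_contra hne
  have hB : {x, y} ⊆ G.dartsAt (G.vertexOf x) := by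
    simp [Finset.insert_subset_iff, dartsAt, hv]
  have h := hG.degree_div_six_lt hB
  rw [Finset.sum_pair hne] at h
  have := one_div_natCast_le_one_div (by norm_num) hx
  have := one_div_natCast_le_one_div (by norm_num) hy
  have : (3 : ℚ) ≤ G.degreeAt x := by exact_mod_cast hG.three_le_degreeAt x
  change (G.degreeAt x : ℚ) / 6 < _ at h
  push_cast at *
  linarith

theorem IsPCC.degreeAt_eq_three_of_large (hG : G.IsPCC) {x y : G.D}
    (hv : G.vertexOf x = G.vertexOf y) (hne : x ≠ y) (hx : 20 ≤ G.faceSizeAt x)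
    (hy : 4 ≤ G.faceSizeAt y) : G.degreeAt x = 3 := by
  classical
  have hB : {x, y} ⊆ G.dartsAt (G.vertexOf x) := by
    simp [Finset.insert_subset_iff, dartsAt, hv]
  have h := hG.degree_div_six_lt hB
  rw [Finset.sum_pair hne] at h
  have := one_div_natCast_le_one_div (by norm_num) hx
  have := one_div_natCast_le_one_div (by norm_num) hy
  have : (G.degreeAt x : ℚ) < 4 := by
    change (G.degreeAt x : ℚ) / 6 < _ at h
    push_cast at *
    linarith
  have : G.degreeAt x < 4 := by exact_mod_cast this
  have := hG.three_le_degreeAt x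
  omega

theorem IsPCC.degreeAt_le_four (hG : G.IsPCC) {x : G.D} (hx : 6 ≤ G.faceSizeAt x) :
    G.degreeAt x ≤ 4 := by
  classical
  have hB : {x} ⊆ G.dartsAt (G.vertexOf x) := by simp [dartsAt]
  have h := hG.degree_div_six_lt hB
  rw [Finset.sum_singleton] at h
  have := one_div_natCast_le_one_div (by norm_num) hx
  have : (G.degreeAt x : ℚ) < 5 := by
    change (G.degreeAt x : ℚ) / 6 < _ at h
    push_cast at *
    linarith
  have : G.degreeAt x < 5 := by exact_mod_cast this
  omega

theorem IsPCC.half_lt_of_degreeAt_eq_three (hG : G.IsPCC) {s : G.D} (h : G.degreeAt s = 3) :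
    (1 : ℚ) / 2 < 1 / G.faceSizeAt s + 1 / G.faceSizeAt (G.σ s) +
      1 / G.faceSizeAt (G.σ (G.σ s)) := by
  have hcurv : 0 < G.curvature (G.vertexOf s) := hG.curvature_pos _
  rw [curvature_vertexOf, h] at hcurv
  simp only [Finset.sum_range_succ, Finset.sum_range_zero] at hcurv
  norm_num at hcurv
  simp only [one_div]
  linarith

theorem IsPCC.one_lt_of_degreeAt_eq_four (hG : G.IsPCC) {s : G.D} (h : G.degreeAt s = 4) :
    (1 : ℚ) < 1 / G.faceSizeAt s + 1 / G.faceSizeAt (G.σ s) +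
      1 / G.faceSizeAt (G.σ (G.σ s)) + 1 / G.faceSizeAt (G.σ (G.σ (G.σ s))) := by
  have hcurv : 0 < G.curvature (G.vertexOf s) := hG.curvature_pos _
  rw [curvature_vertexOf, h] at hcurv
  simp only [Finset.sum_range_succ, Finset.sum_range_zero] at hcurv
  norm_num at hcurv
  simp only [one_div]
  linarith

theorem IsPCC.triangle_or_squares_of_large (hG : G.IsPCC) {s : G.D} (h : G.degreeAt s = 3)
    (hs : 20 ≤ G.faceSizeAt s) :
    G.faceSizeAt (G.σ s) = 3 ∨ G.faceSizeAt (G.σ (G.σ s)) = 3 ∨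
      G.faceSizeAt (G.σ s) = 4 ∧ G.faceSizeAt (G.σ (G.σ s)) = 4 := by
  have hsum := hG.half_lt_of_degreeAt_eq_three h
  have h1 := hG.three_le_faceSizeAt (G.σ s)
  have h2 := hG.three_le_faceSizeAt (G.σ (G.σ s))
  have := one_div_natCast_le_one_div (by norm_num) hs
  by_contra! hne
  have key : ∀ a b : ℕ, 4 ≤ a → 5 ≤ b → (1 : ℚ) / 20 + 1 / a + 1 / b ≤ 1 / 2 := fun a b ha hb => by
    have := one_div_natCast_le_one_div (by norm_num) ha
    have := one_div_natCast_le_one_div (by norm_num) hb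
    push_cast at *
    linarith
  push_cast at *
  rcases (by omega : 5 ≤ G.faceSizeAt (G.σ (G.σ s)) ∨ 5 ≤ G.faceSizeAt (G.σ s)) with h5 | h5
  · have := key (G.faceSizeAt (G.σ s)) _ (by omega) h5; linarith
  · have := key (G.faceSizeAt (G.σ (G.σ s))) _ (by omega) h5; linarith

theorem IsPCC.triangles_of_large_of_degreeAt_eq_four (hG : G.IsPCC) {s : G.D}
    (h : G.degreeAt s = 4) (hs : 20 ≤ G.faceSizeAt s) :
    G.faceSizeAt (G.σ s) = 3 ∧ G.faceSizeAt (G.σ (G.σ s)) = 3 ∧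
      G.faceSizeAt (G.σ (G.σ (G.σ s))) = 3 := by
  have hsum := hG.one_lt_of_degreeAt_eq_four h
  have h₀ := one_div_natCast_le_one_div (by norm_num) hs
  have h₃ := fun t => one_div_natCast_le_one_div (by norm_num) (hG.three_le_faceSizeAt t)
  have h₄ : ∀ t, G.faceSizeAt t ≠ 3 → (1 : ℚ) / G.faceSizeAt t ≤ 1 / (4 : ℕ) := fun t ht =>
    one_div_natCast_le_one_div (by norm_num) (by have := hG.three_le_faceSizeAt t; omega)
  have := h₃ (G.σ s)
  have := h₃ (G.σ (G.σ s))
  have := h₃ (G.σ (G.σ (G.σ s)))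
  push_cast at *
  refine ⟨?_, ?_, ?_⟩ <;> by_contra hne <;> linarith [h₄ _ hne]

theorem IsPCC.false_of_large_across_consecutive (hG : G.IsPCC) {x : G.D}
    (hx : 20 ≤ G.faceSizeAt (G.α x)) (h : 20 ≤ G.faceSizeAt (G.α (G.φ x))) : False := by
  rw [faceSizeAt_alpha] at h
  have heq := hG.eq_of_vertexOf_eq_of_large (by rw [vertexOf_sigma, vertexOf_phi]) h hx
  exact hG.sigma_sigma_ne (G.α x) (by rw [sigma_alpha, heq])

theorem IsPCC.corner_after_large_side (hG : G.IsPCC) {x : G.D} (h5 : 5 ≤ G.faceSizeAt x)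
    (h20 : G.faceSizeAt x < 20) (hl : 20 ≤ G.faceSizeAt (G.α x)) :
    G.σ (G.σ (G.φ x)) = G.α x ∧ G.faceSizeAt (G.α (G.φ x)) = 3 := by
  have hdeg : G.degreeAt (G.α x) = 3 :=
    hG.degreeAt_eq_three_of_large (vertexOf_phi x).symm
      (ne_of_apply_ne G.faceSizeAt (by rw [faceSizeAt_phi]; omega)) hl
      (by rw [faceSizeAt_phi]; omega)
  refine ⟨sigma_sigma_sigma_of_degreeAt_eq_three hdeg, ?_⟩
  rw [faceSizeAt_alpha]
  rcases hG.triangle_or_squares_of_large hdeg hl with h | h | h <;>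
    simp only [sigma_alpha, faceSizeAt_phi] at h <;> omega

theorem IsPCC.corner_before_large_side (hG : G.IsPCC) {x y : G.D} (h5 : 5 ≤ G.faceSizeAt x)
    (h20 : G.faceSizeAt x < 20) (hl : 20 ≤ G.faceSizeAt (G.α x)) (hy : G.σ y = x) :
    y = G.σ (G.σ x) ∧ G.faceSizeAt y = 3 := by
  rw [faceSizeAt_alpha] at hl
  have hdeg : G.degreeAt (G.σ x) = 3 :=
    hG.degreeAt_eq_three_of_large (vertexOf_sigma x)
      (ne_of_apply_ne G.faceSizeAt (by omega)) hl (by omega)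
  have hσσσ : G.σ (G.σ (G.σ x)) = x := by
    rw [degreeAt_sigma] at hdeg; exact sigma_sigma_sigma_of_degreeAt_eq_three hdeg
  have hyx : y = G.σ (G.σ x) := G.σ.injective (by rw [hy, hσσσ])
  refine ⟨hyx, ?_⟩
  rw [hyx]
  rcases hG.triangle_or_squares_of_large hdeg hl with h | h | h <;> rw [hσσσ] at * <;> omega

/-! ### Distance two -/

theorem IsPCC.false_of_large_across_distance_two_of_five_le (hG : G.IsPCC) {d : G.D}
    (h5 : 5 ≤ G.faceSizeAt d) (h20 : G.faceSizeAt d < 20) (hl : 20 ≤ G.faceSizeAt (G.α d))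
    (hl' : 20 ≤ G.faceSizeAt (G.α (G.φ (G.φ d)))) : False := by
  obtain ⟨hσσ, ht⟩ := hG.corner_after_large_side h5 h20 hl
  obtain ⟨hy, -⟩ := hG.corner_before_large_side (x := G.φ (G.φ d))
    (by simpa only [faceSizeAt_phi]) (by simpa only [faceSizeAt_phi]) hl' (sigma_alpha _)
  have h₁ : 20 ≤ G.faceSizeAt (G.α (G.φ (G.α (G.φ d)))) := by
    rwa [phi_alpha, faceSizeAt_alpha, hσσ]
  have h₂ : 20 ≤ G.faceSizeAt (G.α (G.φ (G.φ (G.α (G.φ d))))) := by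
    rwa [show G.α (G.φ (G.φ (G.α (G.φ d)))) = G.σ (G.φ (G.φ d)) from
      G.σ.injective (by rw [sigma_alpha, phi_phi_phi_of_faceSizeAt_eq_three ht, hy]),
      ← faceSizeAt_alpha]
  exact hG.false_of_large_across_consecutive h₁ h₂

/-! ### The square strip -/

/- If the face across `b` is a square, this is the dart across its opposite side. -/
variable (G) in
def acrossSquare (b : G.D) : G.D := G.α (G.φ (G.φ (G.α b)))

theorem acrossSquare_injective : Function.Injective G.acrossSquare := fun _ _ h =>
  G.α.injective (G.φ.injective (G.φ.injective (G.α.injective h)))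

theorem faceSizeAt_le_of_injective {x y : G.D} {f : G.D → G.D} (hf : Function.Injective f)
    (h : ∀ s, G.faceOf s = G.faceOf x → G.faceOf (f s) = G.faceOf y) :
    G.faceSizeAt x ≤ G.faceSizeAt y := by
  classical
  refine Finset.card_le_card_of_injOn f (fun s hs => ?_) hf.injOn
  simp only [dartsOfFace, Finset.coe_filter, Finset.mem_univ, true_and, Set.mem_ofPred_eq] at hs ⊢
  exact h s hs

theorem IsPCC.square_strip_step (hG : G.IsPCC) {b : G.D} (hb : 20 ≤ G.faceSizeAt b)
    (h4 : G.faceSizeAt (G.α b) = 4) (hopp : 20 ≤ G.faceSizeAt (G.acrossSquare b)) :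
    G.faceSizeAt (G.α (G.φ b)) = 4 ∧ G.φ (G.acrossSquare (G.φ b)) = G.acrossSquare b := by
  have hdeg : G.degreeAt (G.φ b) = 3 :=
    hG.degreeAt_eq_three_of_large (vertexOf_phi b)
      (ne_of_apply_ne G.faceSizeAt (by rw [faceSizeAt_phi]; omega)) (by rwa [faceSizeAt_phi])
      (by omega)
  have hσσ : G.σ (G.σ (G.φ b)) = G.α b := by
    rw [← sigma_alpha]
    exact sigma_sigma_sigma_of_degreeAt_eq_three (by rwa [← degreeAt_sigma, sigma_alpha])
  have hsq : G.φ (G.φ (G.φ (G.φ (G.α b)))) = G.α b := iterate_phi_of_faceSizeAt_eq h4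
  have hkey : G.α (G.φ (G.φ (G.φ (G.α b)))) = G.σ (G.φ b) :=
    G.σ.injective (by rw [sigma_alpha, hsq, hσσ])
  set o := G.acrossSquare b
  have hσo : G.σ o = G.φ (G.φ (G.φ (G.α b))) := sigma_alpha _
  have hdego : G.degreeAt o = 3 :=
    hG.degreeAt_eq_three_of_large (vertexOf_sigma o).symm
      (ne_of_apply_ne G.faceSizeAt (by rw [hσo]; simp only [faceSizeAt_phi]; omega)) hopp
      (by rw [hσo]; simp only [faceSizeAt_phi]; omega)
  have hpin : G.φ (G.φ (G.α (G.φ b))) = G.σ (G.σ o) := by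
    rw [phi_alpha, ← hkey, phi_alpha, hσo]
  have hstep : G.φ (G.acrossSquare (G.φ b)) = o := by
    rw [acrossSquare, phi_alpha, hpin]
    exact sigma_sigma_sigma_of_degreeAt_eq_three hdego
  refine ⟨?_, hstep⟩
  have hσσ4 : G.faceSizeAt (G.σ (G.σ (G.φ b))) = 4 := by rwa [hσσ]
  rw [faceSizeAt_alpha]
  rcases hG.triangle_or_squares_of_large hdeg (by rwa [faceSizeAt_phi]) with h | h | h
  · have hy : G.faceSizeAt (G.α (G.φ b)) = 3 := by rwa [faceSizeAt_alpha]
    have h₁ : 20 ≤ G.faceSizeAt (G.α (G.φ (G.φ (G.α (G.φ b))))) := by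
      rwa [hpin, faceSizeAt_alpha, sigma_sigma_sigma_of_degreeAt_eq_three hdego]
    have h₂ : 20 ≤ G.faceSizeAt (G.α (G.φ (G.φ (G.φ (G.α (G.φ b)))))) := by
      rwa [phi_phi_phi_of_faceSizeAt_eq_three hy, alpha_alpha, faceSizeAt_phi]
    exact (hG.false_of_large_across_consecutive h₁ h₂).elim
  · omega
  · exact h.1

variable (G) in
def OnStripBoundary (d s : G.D) : Prop :=
  G.faceOf s = G.faceOf (G.α d) ∨ G.faceOf s = G.faceOf (G.α (G.φ (G.φ d)))

section Strip

variable {d : G.D}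

theorem IsPCC.square_strip_invariant (hG : G.IsPCC) (h4 : G.faceSizeAt d = 4)
    (hl : 20 ≤ G.faceSizeAt (G.α d)) (hl' : 20 ≤ G.faceSizeAt (G.α (G.φ (G.φ d)))) {s : G.D}
    (hs : G.faceOf s = G.faceOf (G.α d)) :
    G.faceSizeAt (G.α s) = 4 ∧ G.faceOf (G.acrossSquare s) = G.faceOf (G.α (G.φ (G.φ d))) := by
  obtain ⟨i, -, rfl⟩ := exists_iterate_phi_eq hs.symm
  induction i with
  | zero => exact ⟨by rwa [Function.iterate_zero_apply, alpha_alpha], by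
      rw [Function.iterate_zero_apply, acrossSquare, alpha_alpha]⟩
  | succ i ih =>
    have hb : 20 ≤ G.faceSizeAt (G.φ^[i] (G.α d)) := by
      rwa [faceSizeAt_congr (faceOf_iterate_phi i _)]
    obtain ⟨ih₁, ih₂⟩ := ih (faceOf_iterate_phi i _)
    obtain ⟨h₁, h₂⟩ := hG.square_strip_step hb ih₁ (by rwa [faceSizeAt_congr ih₂])
    rw [Function.iterate_succ_apply']
    exact ⟨h₁, by rw [← ih₂, ← h₂, faceOf_phi]⟩

theorem IsPCC.onStripBoundary_acrossSquare (hG : G.IsPCC) (h4 : G.faceSizeAt d = 4)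
    (hl : 20 ≤ G.faceSizeAt (G.α d)) (hl' : 20 ≤ G.faceSizeAt (G.α (G.φ (G.φ d)))) {s : G.D}
    (hs : G.OnStripBoundary d s) :
    20 ≤ G.faceSizeAt s ∧ G.faceSizeAt (G.α s) = 4 ∧ G.OnStripBoundary d (G.acrossSquare s) := by
  have hsq : G.φ (G.φ (G.φ (G.φ d))) = d := iterate_phi_of_faceSizeAt_eq h4
  rcases hs with hs | hs
  · obtain ⟨h₁, h₂⟩ := hG.square_strip_invariant h4 hl hl' hs
    exact ⟨by rwa [faceSizeAt_congr hs], h₁, Or.inr h₂⟩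
  · obtain ⟨h₁, h₂⟩ := hG.square_strip_invariant (d := G.φ (G.φ d)) (by simpa only [faceSizeAt_phi])
      hl' (by rwa [hsq]) hs
    exact ⟨by rwa [faceSizeAt_congr hs], h₁, Or.inl (by rw [h₂, hsq])⟩

theorem IsPCC.onStripBoundary_vertex (hG : G.IsPCC) (h4 : G.faceSizeAt d = 4)
    (hl : 20 ≤ G.faceSizeAt (G.α d)) (hl' : 20 ≤ G.faceSizeAt (G.α (G.φ (G.φ d)))) {s : G.D}
    (hs : G.OnStripBoundary d s) :
    G.degreeAt s = 3 ∧ G.faceSizeAt (G.σ s) = 4 ∧ G.faceSizeAt (G.σ (G.σ s)) = 4 := by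
  obtain ⟨hs₁, hs₂, -⟩ := hG.onStripBoundary_acrossSquare h4 hl hl' hs
  have hσs : G.faceSizeAt (G.σ s) = 4 := by rwa [← faceSizeAt_alpha]
  have hdeg : G.degreeAt s = 3 :=
    hG.degreeAt_eq_three_of_large (vertexOf_sigma s).symm
      (ne_of_apply_ne G.faceSizeAt (by omega)) hs₁ (by omega)
  have hprev : G.OnStripBoundary d (G.φ.symm s) := by
    unfold OnStripBoundary
    rwa [← faceOf_phi, Equiv.apply_symm_apply]
  refine ⟨hdeg, hσs, ?_⟩
  rw [sigma_sigma_eq_alpha_symm_phi hdeg]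
  exact (hG.onStripBoundary_acrossSquare h4 hl hl' hprev).2.1

theorem IsPCC.exists_onStripBoundary_vertexOf_eq (hG : G.IsPCC) (h4 : G.faceSizeAt d = 4)
    (hl : 20 ≤ G.faceSizeAt (G.α d)) (hl' : 20 ≤ G.faceSizeAt (G.α (G.φ (G.φ d)))) (x : G.D) :
    ∃ s, G.OnStripBoundary d s ∧ G.vertexOf x = G.vertexOf s := by
  have hconn : G.Connected := hG.1
  induction hconn (G.α d) x with
  | refl => exact ⟨G.α d, Or.inl rfl, rfl⟩
  | tail _ hstep ih =>
    obtain ⟨s, hs, hxs⟩ := ih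
    rcases hstep with rfl | rfl
    · exact ⟨s, hs, by rw [vertexOf_sigma, hxs]⟩
    have hdeg := (hG.onStripBoundary_vertex h4 hl hl' hs).1
    obtain ⟨i, hi, rfl⟩ := exists_iterate_sigma_eq hxs.symm
    rw [hdeg] at hi
    interval_cases i
    · refine ⟨G.φ s, ?_, (vertexOf_phi s).symm⟩
      unfold OnStripBoundary
      rwa [faceOf_phi]
    · obtain ⟨-, -, hacross⟩ := hG.onStripBoundary_acrossSquare h4 hl hl' hs
      refine ⟨G.φ (G.acrossSquare s), by unfold OnStripBoundary; rwa [faceOf_phi], ?_⟩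
      rw [vertexOf_phi, acrossSquare, alpha_alpha, phi_alpha, vertexOf_phi]
      rfl
    · refine ⟨G.φ.symm s, ?_, ?_⟩
      · unfold OnStripBoundary
        rwa [← faceOf_phi, Equiv.apply_symm_apply]
      · show G.vertexOf (G.α (G.σ (G.σ s))) = _
        rw [sigma_sigma_eq_alpha_symm_phi hdeg, alpha_alpha]

theorem IsPCC.faceSizeAt_eq_of_square_strip (hG : G.IsPCC) (h4 : G.faceSizeAt d = 4)
    (hl : 20 ≤ G.faceSizeAt (G.α d)) (hl' : 20 ≤ G.faceSizeAt (G.α (G.φ (G.φ d)))) :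
    G.faceSizeAt (G.α (G.φ (G.φ d))) = G.faceSizeAt (G.α d) := by
  have hsq : G.φ (G.φ (G.φ (G.φ d))) = d := iterate_phi_of_faceSizeAt_eq h4
  refine le_antisymm (faceSizeAt_le_of_injective acrossSquare_injective fun s hs => ?_)
    (faceSizeAt_le_of_injective acrossSquare_injective fun s hs =>
      (hG.square_strip_invariant h4 hl hl' hs).2)
  rw [← hsq]
  exact (hG.square_strip_invariant (d := G.φ (G.φ d)) (by simpa only [faceSizeAt_phi]) hl'
    (by rwa [hsq]) hs).2

theorem IsPCC.faceSizeAt_of_onStripBoundary (hG : G.IsPCC) (h4 : G.faceSizeAt d = 4)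
    (hl : 20 ≤ G.faceSizeAt (G.α d)) (hl' : 20 ≤ G.faceSizeAt (G.α (G.φ (G.φ d)))) {s : G.D}
    (hs : G.OnStripBoundary d s) : G.faceSizeAt s = G.faceSizeAt (G.α d) := by
  rcases hs with hs | hs
  · exact faceSizeAt_congr hs
  · exact (faceSizeAt_congr hs).trans (hG.faceSizeAt_eq_of_square_strip h4 hl hl')

theorem IsPCC.faceVector_of_square_strip (hG : G.IsPCC) (h4 : G.faceSizeAt d = 4)
    (hl : 20 ≤ G.faceSizeAt (G.α d)) (hl' : 20 ≤ G.faceSizeAt (G.α (G.φ (G.φ d))))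
    (v : G.Vertex) : G.faceVector v = {4, 4, G.faceSizeAt (G.α d)} := by
  induction v using Quotient.ind with
  | _ x =>
    obtain ⟨s, hs, hxs⟩ := hG.exists_onStripBoundary_vertexOf_eq h4 hl hl' x
    obtain ⟨h3, hσ, hσσ⟩ := hG.onStripBoundary_vertex h4 hl hl' hs
    change G.faceVector (G.vertexOf x) = _
    rw [hxs, faceVector_vertexOf, h3]
    simp only [Multiset.range_succ, Multiset.range_zero, Multiset.map_cons, Multiset.map_zero]
    rw [show G.faceSizeAt (G.σ^[2] s) = 4 from hσσ, show G.faceSizeAt (G.σ^[1] s) = 4 from hσ,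
      show G.faceSizeAt (G.σ^[0] s) = _ from hG.faceSizeAt_of_onStripBoundary h4 hl hl' hs]
    rfl

theorem IsPCC.card_vertex_of_square_strip (hG : G.IsPCC) (h4 : G.faceSizeAt d = 4)
    (hl : 20 ≤ G.faceSizeAt (G.α d)) (hl' : 20 ≤ G.faceSizeAt (G.α (G.φ (G.φ d)))) :
    Fintype.card G.Vertex = 2 * G.faceSizeAt (G.α d) := by
  have hcurv : ∀ v, G.curvature v = 1 / G.faceSizeAt (G.α d) := fun v => by
    rw [curvature_eq_sum_faceVector, hG.faceVector_of_square_strip h4 hl hl']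
    simp only [Multiset.insert_eq_cons, Multiset.card_cons, Multiset.card_singleton,
      Multiset.map_cons, Multiset.map_singleton, Multiset.sum_cons, Multiset.sum_singleton]
    push_cast
    ring
  have hsphere : G.IsSphere := hG.2.2.2.1
  have h := sum_curvature hsphere
  simp only [hcurv, Finset.sum_const, Finset.card_univ, nsmul_eq_mul] at h
  have hn0 : (G.faceSizeAt (G.α d) : ℚ) ≠ 0 := by have := faceSizeAt_pos (G.α d); positivity
  field_simp at h
  rw [mul_comm]
  exact_mod_cast h

theorem IsPCC.false_of_square_between_large (hG : G.IsPCC) (h4 : G.faceSizeAt d = 4)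
    (hl : 20 ≤ G.faceSizeAt (G.α d)) (hl' : 20 ≤ G.faceSizeAt (G.α (G.φ (G.φ d)))) : False := by
  classical
  have hV := hG.card_vertex_of_square_strip h4 hl hl'
  by_cases heq : G.faceOf (G.α d) = G.faceOf (G.α (G.φ (G.φ d)))
  · have hle : Fintype.card G.Vertex ≤ G.faceSizeAt (G.α d) := by
      calc Fintype.card G.Vertex ≤ ((G.dartsOfFace (G.faceOf (G.α d))).image G.vertexOf).card :=
            Finset.card_le_card fun v _ => by
              induction v using Quotient.ind with
              | _ x =>
                obtain ⟨s, hs, hxs⟩ := hG.exists_onStripBoundary_vertexOf_eq h4 hl hl' x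
                refine Finset.mem_image.2 ⟨s, ?_, hxs.symm⟩
                simp only [dartsOfFace, Finset.mem_filter, Finset.mem_univ, true_and]
                rcases hs with hs | hs
                exacts [hs, hs.trans heq.symm]
        _ ≤ G.faceSizeAt (G.α d) := Finset.card_image_le
    omega
  · have hprism : ¬G.IsPrism := hG.2.2.2.2.2.2.1
    refine hprism (isPrism_of_faceVector_eq hV (hG.faceVector_of_square_strip h4 hl hl') heq
      rfl (hG.faceSizeAt_eq_of_square_strip h4 hl hl') fun f hf hf' => ?_)
    induction f using Quotient.ind with
    | _ x =>
      obtain ⟨s, hs, hxs⟩ := hG.exists_onStripBoundary_vertexOf_eq h4 hl hl' x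
      obtain ⟨h3, hσ, hσσ⟩ := hG.onStripBoundary_vertex h4 hl hl' hs
      obtain ⟨i, hi, rfl⟩ := exists_iterate_sigma_eq hxs.symm
      rw [h3] at hi
      interval_cases i
      · exact absurd hs (not_or.2 ⟨hf, hf'⟩)
      · exact hσ
      · exact hσσ

end Strip

theorem IsPCC.false_of_large_across_distance_two (hG : G.IsPCC) {d : G.D}
    (h4 : 4 ≤ G.faceSizeAt d) (h20 : G.faceSizeAt d < 20) (hl : 20 ≤ G.faceSizeAt (G.α d))
    (hl' : 20 ≤ G.faceSizeAt (G.α (G.φ (G.φ d)))) : False := by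
  rcases h4.eq_or_lt with h4 | h5
  · exact hG.false_of_square_between_large h4.symm hl hl'
  · exact hG.false_of_large_across_distance_two_of_five_le h5 h20 hl hl'

/-! ### The hexagon -/

section Gap

/- In this section `A` and `φ A` are consecutive sides of a face with at most five sides, and the
darts `z₂` and `z₁` lie on large faces at the start of `A` and at the end of `φ A`. -/

variable {A z₁ z₂ : G.D}

theorem IsPCC.sigma_eq_of_gap (hG : G.IsPCC) (h₁ : G.σ z₁ = G.α (G.φ A))
    (h₂ : G.σ (G.σ A) = z₂) (hz₁ : 20 ≤ G.faceSizeAt z₁) (hz₂ : 20 ≤ G.faceSizeAt z₂)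
    (h4 : 4 ≤ G.faceSizeAt A) (h20 : G.faceSizeAt A < 20) :
    G.σ (G.φ (G.φ A)) = z₁ ∧ G.σ z₂ = A := by
  have hφφ : G.σ (G.σ z₁) = G.φ (G.φ A) := by rw [h₁, sigma_alpha]
  have hdeg₁ : G.degreeAt z₁ = 3 :=
    hG.degreeAt_eq_three_of_large (y := G.φ (G.φ A))
      (by rw [← hφφ, vertexOf_sigma, vertexOf_sigma])
      (ne_of_apply_ne G.faceSizeAt (by simp only [faceSizeAt_phi]; omega)) hz₁
      (by simpa only [faceSizeAt_phi])
  have hdeg₂ : G.degreeAt A = 3 := by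
    rw [← degreeAt_sigma, ← degreeAt_sigma, h₂]
    exact hG.degreeAt_eq_three_of_large (y := A) (by rw [← h₂, vertexOf_sigma, vertexOf_sigma])
      (ne_of_apply_ne G.faceSizeAt (by omega)) hz₂ h4
  refine ⟨?_, ?_⟩
  · rw [← hφφ]; exact sigma_sigma_sigma_of_degreeAt_eq_three hdeg₁
  · rw [← h₂]; exact sigma_sigma_sigma_of_degreeAt_eq_three hdeg₂

theorem IsPCC.false_of_gap_square (hG : G.IsPCC) (hσ₁ : G.σ (G.φ (G.φ A)) = z₁)
    (hσ₂ : G.σ z₂ = A) (hz₁ : 20 ≤ G.faceSizeAt z₁) (hz₂ : 20 ≤ G.faceSizeAt z₂)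
    (hA : G.faceSizeAt A = 4) : False := by
  have hsq : G.φ (G.φ (G.φ (G.φ A))) = A := iterate_phi_of_faceSizeAt_eq hA
  have hlarge : 20 ≤ G.faceSizeAt (G.α (G.φ (G.φ A))) := by rwa [faceSizeAt_alpha, hσ₁]
  have hlarge' : 20 ≤ G.faceSizeAt (G.α (G.φ (G.φ (G.φ A)))) := by
    rwa [show G.α (G.φ (G.φ (G.φ A))) = z₂ from G.σ.injective (by rw [sigma_alpha, hsq, hσ₂])]
  exact hG.false_of_large_across_consecutive hlarge hlarge'

theorem IsPCC.false_of_gap_pentagon (hG : G.IsPCC) (hσ₁ : G.σ (G.φ (G.φ A)) = z₁)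
    (hσ₂ : G.σ z₂ = A) (hz₁ : 20 ≤ G.faceSizeAt z₁) (hz₂ : 20 ≤ G.faceSizeAt z₂)
    (hA : G.faceSizeAt A = 5) : False := by
  have hpent : G.φ (G.φ (G.φ (G.φ (G.φ A)))) = A := iterate_phi_of_faceSizeAt_eq hA
  have hlarge : 20 ≤ G.faceSizeAt (G.α (G.φ (G.φ A))) := by rwa [faceSizeAt_alpha, hσ₁]
  have hdeg₃ : G.degreeAt (G.α (G.φ (G.φ A))) = 3 :=
    hG.degreeAt_eq_three_of_large (vertexOf_phi _).symm
      (ne_of_apply_ne G.faceSizeAt (by simp only [faceSizeAt_phi]; omega)) hlarge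
      (by simp only [faceSizeAt_phi]; omega)
  have ht : G.faceSizeAt (G.σ (G.φ (G.φ (G.φ A)))) = 3 := by
    rcases hG.triangle_or_squares_of_large hdeg₃ hlarge with h | h | h <;>
      simp only [sigma_alpha, faceSizeAt_phi] at h <;> omega
  set w := G.α (G.φ (G.φ (G.φ A)))
  have hw : G.faceSizeAt w = 3 := by rwa [faceSizeAt_alpha]
  have h₃ : 20 ≤ G.faceSizeAt (G.α (G.φ w)) := by
    rwa [phi_alpha, faceSizeAt_alpha, ← sigma_alpha, sigma_sigma_sigma_of_degreeAt_eq_three hdeg₃]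
  have hq : G.α (G.φ (G.φ (G.φ (G.φ A)))) = z₂ :=
    G.σ.injective (by rw [sigma_alpha, hpent, hσ₂])
  have hdeg₄ : G.degreeAt (G.φ (G.φ (G.φ (G.φ A)))) = 3 := by
    rw [← degreeAt_sigma]
    exact hG.degreeAt_eq_three_of_large (vertexOf_sigma _)
      (ne_of_apply_ne G.faceSizeAt
        (by rw [← faceSizeAt_alpha, hq]; simp only [faceSizeAt_phi]; omega))
      (by rwa [← faceSizeAt_alpha, hq]) (by simp only [faceSizeAt_phi]; omega)
  have hw' : w = G.σ (G.σ (G.φ (G.φ (G.φ (G.φ A))))) :=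
    G.σ.injective (by rw [sigma_alpha]; exact (sigma_sigma_sigma_of_degreeAt_eq_three hdeg₄).symm)
  have h₄ : 20 ≤ G.faceSizeAt (G.α (G.φ (G.φ w))) := by
    rwa [show G.α (G.φ (G.φ w)) = G.σ (G.φ (G.φ (G.φ (G.φ A)))) from
      G.σ.injective (by rw [sigma_alpha, phi_phi_phi_of_faceSizeAt_eq_three hw, ← hw']),
      ← faceSizeAt_alpha, hq]
  exact hG.false_of_large_across_consecutive h₃ h₄

theorem IsPCC.phi_eq_of_gap_triangle_of_degreeAt_eq_three (hG : G.IsPCC)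
    (h₁ : G.σ z₁ = G.α (G.φ A)) (h₂ : G.σ (G.σ A) = z₂) (hz₁ : 20 ≤ G.faceSizeAt z₁)
    (hz₂ : 20 ≤ G.faceSizeAt z₂) (hA : G.faceSizeAt A = 3) (hdeg : G.degreeAt z₁ = 3) :
    G.φ z₂ = z₁ := by
  have hφφ : G.σ (G.σ z₁) = G.φ (G.φ A) := by rw [h₁, sigma_alpha]
  have hσ₁ : G.σ (G.φ (G.φ A)) = z₁ := by
    rw [← hφφ]; exact sigma_sigma_sigma_of_degreeAt_eq_three hdeg
  have heq : G.α (G.φ (G.φ A)) = z₂ :=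
    hG.eq_of_vertexOf_eq_of_large
      (by rw [← vertexOf_phi, phi_phi_phi_of_faceSizeAt_eq_three hA, ← h₂, vertexOf_sigma,
        vertexOf_sigma]) (by rwa [faceSizeAt_alpha, hσ₁]) hz₂
  rw [← heq, phi_alpha, hσ₁]

theorem IsPCC.false_of_gap_triangle_of_degreeAt_eq_four (hG : G.IsPCC)
    (h₁ : G.σ z₁ = G.α (G.φ A)) (h₂ : G.σ (G.σ A) = z₂) (hz₁ : 20 ≤ G.faceSizeAt z₁)
    (hz₂ : 20 ≤ G.faceSizeAt z₂) (hA : G.faceSizeAt A = 3) (hdeg : G.degreeAt z₁ = 4) :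
    False := by
  have hφφ : G.σ (G.σ z₁) = G.φ (G.φ A) := by rw [h₁, sigma_alpha]
  set W := G.σ (G.φ (G.φ A))
  have hW : G.σ W = z₁ := by
    show G.σ (G.σ (G.φ (G.φ A))) = z₁
    rw [← hφφ]; exact iterate_sigma_of_degreeAt_eq hdeg
  have hW3 : G.faceSizeAt W = 3 := by
    have := (hG.triangles_of_large_of_degreeAt_eq_four hdeg hz₁).2.2
    rwa [hφφ] at this
  have hlarge : 20 ≤ G.faceSizeAt (G.α W) := by rwa [faceSizeAt_alpha, hW]
  have hφφW : G.φ (G.φ W) = G.α (G.φ (G.φ A)) := by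
    rw [← alpha_alpha (G.φ (G.φ W))]
    exact congrArg G.α (G.σ.injective (by rw [sigma_alpha, phi_phi_phi_of_faceSizeAt_eq_three hW3]))
  have hdegA : G.degreeAt A ≤ 4 := by
    rw [← degreeAt_sigma, ← degreeAt_sigma, h₂]; exact hG.degreeAt_le_four (by omega)
  obtain ⟨i, hi, hiA⟩ := exists_iterate_sigma_eq (d := A) (d' := G.α (G.φ (G.φ A)))
    (by rw [← vertexOf_phi, phi_phi_phi_of_faceSizeAt_eq_three hA])
  have hi4 : i < 4 := by omega
  interval_cases i
  · have hφA : G.φ A = W := (congrArg G.φ hiA).trans (phi_alpha _)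
    refine hG.vertexOf_alpha_ne (G.φ A) ((vertexOf_phi _).symm.trans ?_)
    conv_rhs => rw [hφA]
    exact (vertexOf_sigma _).symm
  · have h' : G.α (G.σ A) = G.φ (G.φ A) := by
      rw [show G.σ A = _ from hiA, alpha_alpha]
    have : G.faceSizeAt (G.φ (G.φ A)) = G.faceSizeAt z₂ := by
      rw [← h', faceSizeAt_alpha, h₂]
    simp only [faceSizeAt_phi] at this
    omega
  · have : G.faceSizeAt z₂ = G.faceSizeAt W := by
      rw [← h₂, show G.σ (G.σ A) = _ from hiA, faceSizeAt_alpha]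
    omega
  · have hφW : G.α (G.φ W) = z₂ :=
      G.σ.injective (by rw [sigma_alpha, hφφW, ← hiA, ← h₂]; rfl)
    exact hG.false_of_large_across_consecutive hlarge (hφW ▸ hz₂)

theorem IsPCC.phi_eq_of_gap (hG : G.IsPCC) (h₁ : G.σ z₁ = G.α (G.φ A))
    (h₂ : G.σ (G.σ A) = z₂) (hz₁ : 20 ≤ G.faceSizeAt z₁) (hz₂ : 20 ≤ G.faceSizeAt z₂)
    (h5 : G.faceSizeAt A ≤ 5) : G.φ z₂ = z₁ := by
  have := hG.three_le_faceSizeAt A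
  rcases (by omega : G.faceSizeAt A = 3 ∨ 4 ≤ G.faceSizeAt A) with hA | hA
  · have := hG.three_le_degreeAt z₁
    have := hG.degreeAt_le_four (x := z₁) (by omega)
    rcases (by omega : G.degreeAt z₁ = 3 ∨ G.degreeAt z₁ = 4) with hdeg | hdeg
    · exact hG.phi_eq_of_gap_triangle_of_degreeAt_eq_three h₁ h₂ hz₁ hz₂ hA hdeg
    · exact (hG.false_of_gap_triangle_of_degreeAt_eq_four h₁ h₂ hz₁ hz₂ hA hdeg).elim
  · obtain ⟨hσ₁, hσ₂⟩ := hG.sigma_eq_of_gap h₁ h₂ hz₁ hz₂ hA (by omega)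
    rcases (by omega : G.faceSizeAt A = 4 ∨ G.faceSizeAt A = 5) with hA | hA
    · exact (hG.false_of_gap_square hσ₁ hσ₂ hz₁ hz₂ hA).elim
    · exact (hG.false_of_gap_pentagon hσ₁ hσ₂ hz₁ hz₂ hA).elim

end Gap

/- The vertex of `m` lies on a face with at least six sides between two triangles, the face of `y`
and the face across `m`; the two large darts sit at the far corners of these triangles. -/
theorem IsPCC.eq_or_phi_eq_of_between_triangles (hG : G.IsPCC) {m y : G.D}
    (hm : 6 ≤ G.faceSizeAt m) (hy : G.σ y = m) (ht : G.faceSizeAt y = 3)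
    (ht' : G.faceSizeAt (G.α m) = 3) (hz₁ : 20 ≤ G.faceSizeAt (G.α (G.φ y)))
    (hz₂ : 20 ≤ G.faceSizeAt (G.σ (G.σ (G.α (G.φ (G.α m)))))) :
    G.α (G.φ y) = G.σ (G.σ (G.α (G.φ (G.α m)))) ∨
      G.φ (G.σ (G.σ (G.α (G.φ (G.α m))))) = G.α (G.φ y) := by
  have hσm : G.σ m = G.φ (G.α m) := (phi_alpha m).symm
  have hσσm : G.σ (G.σ m) = G.φ (G.α (G.φ (G.α m))) :=
    (congrArg G.σ hσm).trans (phi_alpha _).symm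
  have := hG.three_le_degreeAt m
  have := hG.degreeAt_le_four hm
  rcases (by omega : G.degreeAt m = 3 ∨ G.degreeAt m = 4) with hdeg | hdeg
  · have hX : G.φ (G.α (G.φ (G.α m))) = y :=
      G.σ.injective (by rw [← hσσm, hy]; exact sigma_sigma_sigma_of_degreeAt_eq_three hdeg)
    have hA : G.faceSizeAt (G.α (G.φ (G.α m))) = 3 := by rw [← faceSizeAt_phi, hX, ht]
    left
    refine hG.eq_of_vertexOf_eq_of_large ?_ hz₁ hz₂
    rw [vertexOf_sigma, vertexOf_sigma, ← phi_phi_phi_of_faceSizeAt_eq_three hA, hX,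
      vertexOf_phi]
  · have hσX : G.σ (G.φ (G.α (G.φ (G.α m)))) = y :=
      G.σ.injective (by rw [← hσσm, hy]; exact iterate_sigma_of_degreeAt_eq hdeg)
    have h₁ : G.σ (G.α (G.φ y)) = G.α (G.φ (G.α (G.φ (G.α m)))) :=
      G.φ.injective (by rw [sigma_alpha, phi_alpha, hσX, phi_phi_phi_of_faceSizeAt_eq_three ht])
    have h5 : G.faceSizeAt (G.α (G.φ (G.α m))) ≤ 5 := by
      have hcurv := hG.one_lt_of_degreeAt_eq_four hdeg
      rw [hσσm, hσX, hσm, faceSizeAt_phi, faceSizeAt_phi, ht, ht'] at hcurv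
      have := one_div_natCast_le_one_div (by norm_num) hm
      by_contra! h6
      have := one_div_natCast_le_one_div (by norm_num) h6
      push_cast at *
      linarith
    exact Or.inr (hG.phi_eq_of_gap h₁ rfl hz₁ hz₂ h5)

theorem IsPCC.exists_iterate_of_large_across_hexagon (hG : G.IsPCC) {d : G.D}
    (h6 : G.faceSizeAt d = 6) (hl : 20 ≤ G.faceSizeAt (G.α d))
    (hl' : 20 ≤ G.faceSizeAt (G.α (G.φ (G.φ (G.φ d))))) :
    ∃ k, 3 ≤ k ∧ k ≤ 4 ∧ G.φ^[k] (G.α (G.φ (G.φ (G.φ d)))) = G.α d := by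
  obtain ⟨hσσ, ht⟩ := hG.corner_after_large_side (by omega) (by omega) hl
  obtain ⟨hy, ht'⟩ := hG.corner_before_large_side (x := G.φ (G.φ (G.φ d)))
    (by simp only [faceSizeAt_phi]; omega) (by simp only [faceSizeAt_phi]; omega) hl'
    (sigma_alpha (G.φ (G.φ d)))
  have hz₁ : G.φ (G.α (G.φ (G.α (G.φ d)))) = G.α d := by rw [phi_alpha, phi_alpha, hσσ]
  have hα : G.α (G.φ (G.φ (G.α (G.φ (G.φ d))))) = G.σ (G.φ (G.φ (G.φ d))) :=
    G.σ.injective (by rw [sigma_alpha, phi_phi_phi_of_faceSizeAt_eq_three ht', hy])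
  have hz₂ : G.σ (G.σ (G.α (G.φ (G.α (G.φ (G.φ d)))))) = G.φ (G.σ (G.φ (G.φ (G.φ d)))) := by
    rw [sigma_alpha, ← phi_alpha, hα]
  rcases hG.eq_or_phi_eq_of_between_triangles (m := G.φ (G.φ d))
    (by simp only [faceSizeAt_phi]; omega) (sigma_alpha (G.φ d)) ht ht'
    (by rwa [phi_alpha, faceSizeAt_alpha, hσσ])
    (by rwa [hz₂, faceSizeAt_phi, ← faceSizeAt_alpha]) with heq | heq
  · refine ⟨3, le_rfl, by norm_num, ?_⟩
    show G.φ (G.φ (G.φ _)) = _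
    rw [phi_alpha, ← hz₂, ← heq, hz₁]
  · refine ⟨4, by norm_num, le_rfl, ?_⟩
    show G.φ (G.φ (G.φ (G.φ _))) = _
    rw [phi_alpha, ← hz₂, heq, hz₁]

theorem IsPCC.false_of_large_across_hexagon (hG : G.IsPCC) {d : G.D}
    (h6 : G.faceSizeAt d = 6) (hl : 20 ≤ G.faceSizeAt (G.α d))
    (hl' : 20 ≤ G.faceSizeAt (G.α (G.φ (G.φ (G.φ d))))) : False := by
  have hd : G.φ (G.φ (G.φ (G.φ (G.φ (G.φ d))))) = d := iterate_phi_of_faceSizeAt_eq h6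
  obtain ⟨k, hk, hk4, hdk⟩ := hG.exists_iterate_of_large_across_hexagon h6 hl hl'
  obtain ⟨k', -, hk'4, hdk'⟩ := hG.exists_iterate_of_large_across_hexagon
    (d := G.φ (G.φ (G.φ d))) (by simpa only [faceSizeAt_phi]) hl' (by rwa [hd])
  rw [hd] at hdk'
  have := faceSizeAt_le_of_iterate (n := k + k') (by omega)
    (by rw [Function.iterate_add_apply, hdk', hdk])
  omega

theorem IsPCC.eq_of_large_across (hG : G.IsPCC) {d d' : G.D} (hf : G.faceOf d = G.faceOf d')
    (h6 : G.faceSizeAt d ≤ 6) (hl : 20 ≤ G.faceSizeAt (G.α d))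
    (hl' : 20 ≤ G.faceSizeAt (G.α d')) : d = d' := by
  obtain ⟨j, hj, rfl⟩ := exists_iterate_phi_eq hf
  have hback : G.φ^[G.faceSizeAt d - j] (G.φ^[j] d) = d := by
    rw [← Function.iterate_add_apply, Nat.sub_add_cancel hj.le, iterate_faceSizeAt]
  have hsize : G.faceSizeAt (G.φ^[j] d) = G.faceSizeAt d :=
    faceSizeAt_congr (faceOf_iterate_phi j d)
  have := hG.three_le_faceSizeAt d
  by_contra hne
  have hj0 : j ≠ 0 := by rintro rfl; exact hne rfl
  by_cases hj1 : j = 1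
  · subst hj1; exact hG.false_of_large_across_consecutive hl hl'
  by_cases hj1' : G.faceSizeAt d - j = 1
  · rw [hj1'] at hback
    have hl'' : 20 ≤ G.faceSizeAt (G.α (G.φ (G.φ^[j] d))) := by
      rwa [show G.φ (G.φ^[j] d) = d from hback]
    exact hG.false_of_large_across_consecutive hl' hl''
  by_cases hj2 : j = 2
  · subst hj2; exact hG.false_of_large_across_distance_two (by omega) (by omega) hl hl'
  by_cases hj2' : G.faceSizeAt d - j = 2
  · rw [hj2'] at hback
    exact hG.false_of_large_across_distance_two (by omega) (by omega) hl'
      (by rwa [show G.φ (G.φ (G.φ^[j] d)) = d from hback])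
  obtain rfl : j = 3 := by omega
  exact hG.false_of_large_across_hexagon (by omega) hl hl'

end PlaneGraph

/-- In a planar PCC graph, let `σ, σ', κ` be faces with
`|σ| ≥ 20`, `|σ'| ≥ 20` and `|κ| ≤ 6`, and let `e, e'` be boundary edges of
`κ` with `e` on the boundary of `σ` and `e'` on the boundary of `σ'`.
Then `σ = σ'` and `e = e'`. -/
theorem pcc_small_face_meets_at_most_one_large_face (G : PlaneGraph)
    (hG : G.IsPCC) (σ σ' κ : G.Face)
    (hσ : 20 ≤ G.faceSize σ) (hσ' : 20 ≤ G.faceSize σ')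
    (hκ : G.faceSize κ ≤ 6)
    (e e' : G.Edge)
    (heκ : e ∈ G.boundaryEdges κ) (he'κ : e' ∈ G.boundaryEdges κ)
    (heσ : e ∈ G.boundaryEdges σ) (he'σ' : e' ∈ G.boundaryEdges σ') :
    σ = σ' ∧ e = e' := by
  obtain ⟨d, rfl, rfl⟩ := PlaneGraph.mem_boundaryEdges.1 heκ
  obtain ⟨d', hd', rfl⟩ := PlaneGraph.mem_boundaryEdges.1 he'κ
  have hdσ := PlaneGraph.faceOf_alpha_eq_of_edgeOf_mem heσ (by rintro rfl; omega)
  have hd'σ' := PlaneGraph.faceOf_alpha_eq_of_edgeOf_mem he'σ' (by rw [hd']; rintro rfl; omega)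
  subst hdσ hd'σ'
  obtain rfl := hG.eq_of_large_across hd'.symm hκ hσ hσ'
  exact ⟨rfl, rfl⟩
end

section
/- Let d ≥ 3 and let a₁ ≤ a₂ ≤ … ≤ a_d be integers with a₁ ≥ 3. Then 1 − d/2 + Σ_{i=1}^{d} 1/aᵢ > 0 if and only if the ordered tuple (a₁,…,a_d) is one of the following: (3,a,b) with 3 ≤ a ≤ 6 and a ≤ b; (3,7,a) with 7 ≤ a ≤ 41; (3,8,a) with 8 ≤ a ≤ 23; (3,9,a) with 9 ≤ a ≤ 17; (3,10,a) with 10 ≤ a ≤ 14; (3,11,a) with 11 ≤ a ≤ 13; (4,4,a) with 4 ≤ a; (4,5,a) with 5 ≤ a ≤ 19; (4,6,a) with 6 ≤ a ≤ 11; (4,7,a) with 7 ≤ a ≤ 9; (5,5,a) with 5 ≤ a ≤ 9; (5,6,6); (5,6,7); (3,3,3,a) with 3 ≤ a; (3,3,4,a) with 4 ≤ a ≤ 11; (3,3,5,a) with 5 ≤ a ≤ 7; (3,4,4,a) with 4 ≤ a ≤ 5; (3,3,3,3,a) with 3 ≤ a ≤ 5. -/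
/-!
The curvature `1 - d/2 + ∑ 1/aᵢ` decreases when a face grows. Comparing a sorted face vector
entrywise with `[6,6,6]`, `[3,12,12]`, `[4,4,4,4]`, `[3,5,5,5]`, `[3,3,7,7]`, `[3,3,3,4,4]` or
`[3,3,3,3,3,3,…]`, all of curvature `≤ 0`, shows that `d ≤ 5` and that every entry but the last is
bounded. For each of the finitely many remaining prefixes, clearing denominators makes positivity a
linear condition on the last entry.
-/

def vertexCurvature (l : List ℕ) : ℚ :=
  1 - l.length / 2 + (l.map fun a : ℕ => (1 : ℚ) / a).sum

/-- Without the type ascription `a : ℕ`, the left-hand side elaborates by first coercing `l` to a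
`List ℚ` through the list monad. -/
theorem one_sub_half_length_add_sum_eq_vertexCurvature (l : List ℕ) :
    1 - (l.length : ℚ) / 2 + (l.map fun a => (1 : ℚ) / a).sum = vertexCurvature l := by
  simp [vertexCurvature, ← List.map_eq_flatMap, Function.comp_def]

theorem vertexCurvature_le_of_forall₂ {l l' : List ℕ} (h : List.Forall₂ (· ≤ ·) l l')
    (hl : ∀ a ∈ l, 0 < a) : vertexCurvature l' ≤ vertexCurvature l := by
  have hsum : (l'.map fun a : ℕ => (1 : ℚ) / a).sum ≤ (l.map fun a : ℕ => (1 : ℚ) / a).sum := by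
    induction h with
    | nil => rfl
    | @cons a b _ _ hab _ ih =>
      simp only [List.mem_cons, forall_eq_or_imp] at hl
      simp only [List.map_cons, List.sum_cons]
      have ha : (0 : ℚ) < a := by exact_mod_cast hl.1
      gcongr
      exact ih hl.2
  rw [vertexCurvature, vertexCurvature, h.length_eq]
  linarith

theorem vertexCurvature_nonpos_of_six_le_length {l : List ℕ} (hl : 6 ≤ l.length)
    (h : ∀ a ∈ l, 3 ≤ a) : vertexCurvature l ≤ 0 := by
  have hle : ∀ x ∈ l.map fun a : ℕ => (1 : ℚ) / a, x ≤ 1 / 3 := by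
    rw [List.forall_mem_map]
    intro a ha
    gcongr
    exact_mod_cast h a ha
  have hsum := List.sum_le_card_nsmul _ _ hle
  have hl' : (6 : ℚ) ≤ l.length := by exact_mod_cast hl
  rw [List.length_map, nsmul_eq_mul] at hsum
  rw [vertexCurvature]
  linarith

section

variable {a b c d e : ℕ}

theorem vertexCurvature_three_pos_iff (ha : 0 < a) (hb : 0 < b) (hc : 0 < c) :
    0 < vertexCurvature [a, b, c] ↔ a * b * c < 2 * (a * b + b * c + c * a) := by
  have key : vertexCurvature [a, b, c] =
      (2 * (a * b + b * c + c * a) - a * b * c : ℚ) / (2 * a * b * c) := by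
    simp only [vertexCurvature, List.length_cons, List.length_nil, List.map_cons, List.map_nil,
      List.sum_cons, List.sum_nil]
    push_cast
    field_simp
    ring
  rw [key, div_pos_iff_of_pos_right (by positivity), sub_pos]
  norm_cast

theorem vertexCurvature_four_pos_iff (ha : 0 < a) (hb : 0 < b) (hc : 0 < c) (hd : 0 < d) :
    0 < vertexCurvature [a, b, c, d] ↔
      a * b * c * d < b * c * d + a * c * d + a * b * d + a * b * c := by
  have key : vertexCurvature [a, b, c, d] =
      (b * c * d + a * c * d + a * b * d + a * b * c - a * b * c * d : ℚ) / (a * b * c * d) := by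
    simp only [vertexCurvature, List.length_cons, List.length_nil, List.map_cons, List.map_nil,
      List.sum_cons, List.sum_nil]
    push_cast
    field_simp
    ring
  rw [key, div_pos_iff_of_pos_right (by positivity), sub_pos]
  norm_cast

theorem vertexCurvature_five_pos_iff (ha : 0 < a) (hb : 0 < b) (hc : 0 < c) (hd : 0 < d)
    (he : 0 < e) :
    0 < vertexCurvature [a, b, c, d, e] ↔ 3 * (a * b * c * d * e) <
      2 * (b * c * d * e + a * c * d * e + a * b * d * e + a * b * c * e + a * b * c * d) := by
  have key : vertexCurvature [a, b, c, d, e] =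
      (2 * (b * c * d * e + a * c * d * e + a * b * d * e + a * b * c * e + a * b * c * d)
        - 3 * (a * b * c * d * e) : ℚ) / (2 * a * b * c * d * e) := by
    simp only [vertexCurvature, List.length_cons, List.length_nil, List.map_cons, List.map_nil,
      List.sum_cons, List.sum_nil]
    push_cast
    field_simp
    ring
  rw [key, div_pos_iff_of_pos_right (by positivity), sub_pos]
  norm_cast

theorem le_five_and_le_eleven_of_vertexCurvature_pos (ha : 3 ≤ a) (hab : a ≤ b) (hbc : b ≤ c)
    (h : 0 < vertexCurvature [a, b, c]) : a ≤ 5 ∧ b ≤ 11 := by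
  constructor <;> by_contra! hlt <;> apply h.not_ge
  · exact (vertexCurvature_le_of_forall₂ (l := [6, 6, 6]) (by simp; omega) (by simp)).trans
      (by norm_num [vertexCurvature])
  · exact (vertexCurvature_le_of_forall₂ (l := [3, 12, 12]) (by simp; omega) (by simp)).trans
      (by norm_num [vertexCurvature])

theorem eq_three_and_le_four_and_le_six_of_vertexCurvature_pos (ha : 3 ≤ a) (hab : a ≤ b)
    (hbc : b ≤ c) (hcd : c ≤ d) (h : 0 < vertexCurvature [a, b, c, d]) :
    a = 3 ∧ b ≤ 4 ∧ c ≤ 6 := by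
  refine ⟨?_, ?_, ?_⟩ <;> by_contra! hlt <;> apply h.not_ge
  · exact (vertexCurvature_le_of_forall₂ (l := [4, 4, 4, 4]) (by simp; omega) (by simp)).trans
      (by norm_num [vertexCurvature])
  · exact (vertexCurvature_le_of_forall₂ (l := [3, 5, 5, 5]) (by simp; omega) (by simp)).trans
      (by norm_num [vertexCurvature])
  · exact (vertexCurvature_le_of_forall₂ (l := [3, 3, 7, 7]) (by simp; omega) (by simp)).trans
      (by norm_num [vertexCurvature])

theorem le_three_of_vertexCurvature_pos (ha : 3 ≤ a) (hab : a ≤ b) (hbc : b ≤ c) (hde : d ≤ e)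
    (h : 0 < vertexCurvature [a, b, c, d, e]) : d ≤ 3 := by
  by_contra! hlt
  apply h.not_ge
  exact (vertexCurvature_le_of_forall₂ (l := [3, 3, 3, 4, 4]) (by simp; omega) (by simp)).trans
    (by norm_num [vertexCurvature])

end

/-- Characterization of the admissible face vectors: for a
nondecreasing list `l = [a₁, …, a_d]` of integers with `d ≥ 3` and `a₁ ≥ 3`,
the curvature expression `1 - d/2 + ∑ᵢ 1/aᵢ` is strictly positive if and only
if the tuple is one of those listed in Table 1 of the paper. -/
theorem admissible_face_vectors (l : List ℕ) (hlen : 3 ≤ l.length)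
    (hsorted : l.Pairwise (· ≤ ·)) (hge3 : ∀ a ∈ l, 3 ≤ a) :
    (0 < 1 - (l.length : ℚ) / 2 + (l.map fun a => (1 : ℚ) / a).sum) ↔
      ((∃ a b : ℕ, l = [3, a, b] ∧ 3 ≤ a ∧ a ≤ 6 ∧ a ≤ b) ∨
        (∃ a : ℕ, l = [3, 7, a] ∧ 7 ≤ a ∧ a ≤ 41) ∨
        (∃ a : ℕ, l = [3, 8, a] ∧ 8 ≤ a ∧ a ≤ 23) ∨
        (∃ a : ℕ, l = [3, 9, a] ∧ 9 ≤ a ∧ a ≤ 17) ∨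
        (∃ a : ℕ, l = [3, 10, a] ∧ 10 ≤ a ∧ a ≤ 14) ∨
        (∃ a : ℕ, l = [3, 11, a] ∧ 11 ≤ a ∧ a ≤ 13) ∨
        (∃ a : ℕ, l = [4, 4, a] ∧ 4 ≤ a) ∨
        (∃ a : ℕ, l = [4, 5, a] ∧ 5 ≤ a ∧ a ≤ 19) ∨
        (∃ a : ℕ, l = [4, 6, a] ∧ 6 ≤ a ∧ a ≤ 11) ∨
        (∃ a : ℕ, l = [4, 7, a] ∧ 7 ≤ a ∧ a ≤ 9) ∨
        (∃ a : ℕ, l = [5, 5, a] ∧ 5 ≤ a ∧ a ≤ 9) ∨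
        l = [5, 6, 6] ∨
        l = [5, 6, 7] ∨
        (∃ a : ℕ, l = [3, 3, 3, a] ∧ 3 ≤ a) ∨
        (∃ a : ℕ, l = [3, 3, 4, a] ∧ 4 ≤ a ∧ a ≤ 11) ∨
        (∃ a : ℕ, l = [3, 3, 5, a] ∧ 5 ≤ a ∧ a ≤ 7) ∨
        (∃ a : ℕ, l = [3, 4, 4, a] ∧ 4 ≤ a ∧ a ≤ 5) ∨
        (∃ a : ℕ, l = [3, 3, 3, 3, a] ∧ 3 ≤ a ∧ a ≤ 5)) := by
  rw [one_sub_half_length_add_sum_eq_vertexCurvature]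
  rcases l with _ | ⟨a, _ | ⟨b, _ | ⟨c, _ | ⟨d, _ | ⟨e, _ | ⟨f, rest⟩⟩⟩⟩⟩⟩
  iterate 3 simp at hlen
  · simp only [List.pairwise_cons, List.forall_mem_cons, List.not_mem_nil, IsEmpty.forall_iff,
      implies_true, List.Pairwise.nil, and_true] at hsorted hge3
    obtain ⟨⟨⟨hab, -⟩, hbc⟩, ha, -⟩ := And.intro hsorted hge3
    have hbd := le_five_and_le_eleven_of_vertexCurvature_pos ha hab hbc
    rw [vertexCurvature_three_pos_iff (by omega) (by omega) (by omega)] at hbd ⊢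
    by_cases hB : a ≤ 5 ∧ b ≤ 11
    · obtain ⟨ha5, hb11⟩ := hB
      interval_cases a <;> interval_cases b <;> simp <;> omega
    · exact iff_of_false (mt hbd hB) (by simp; omega)
  · simp only [List.pairwise_cons, List.forall_mem_cons, List.not_mem_nil, IsEmpty.forall_iff,
      implies_true, List.Pairwise.nil, and_true] at hsorted hge3
    obtain ⟨⟨⟨hab, -⟩, ⟨hbc, -⟩, hcd⟩, ha, -⟩ := And.intro hsorted hge3
    have hbd := eq_three_and_le_four_and_le_six_of_vertexCurvature_pos ha hab hbc hcd
    rw [vertexCurvature_four_pos_iff (by omega) (by omega) (by omega) (by omega)] at hbd ⊢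
    by_cases hB : a = 3 ∧ b ≤ 4 ∧ c ≤ 6
    · obtain ⟨rfl, hb4, hc6⟩ := hB
      interval_cases b <;> interval_cases c <;> simp <;> omega
    · exact iff_of_false (mt hbd hB) (by simp; omega)
  · simp only [List.pairwise_cons, List.forall_mem_cons, List.not_mem_nil, IsEmpty.forall_iff,
      implies_true, List.Pairwise.nil, and_true] at hsorted hge3
    obtain ⟨⟨⟨hab, -⟩, ⟨hbc, -⟩, ⟨hcd, -⟩, hde⟩, ha, -⟩ := And.intro hsorted hge3
    have hbd := le_three_of_vertexCurvature_pos ha hab hbc hde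
    rw [vertexCurvature_five_pos_iff (by omega) (by omega) (by omega) (by omega) (by omega)]
      at hbd ⊢
    by_cases hB : d ≤ 3
    · obtain ⟨rfl, rfl, rfl, rfl⟩ : a = 3 ∧ b = 3 ∧ c = 3 ∧ d = 3 := by omega
      simp; omega
    · exact iff_of_false (mt hbd hB) (by simp; omega)
  · exact iff_of_false (vertexCurvature_nonpos_of_six_le_length (by simp) hge3).not_gt (by simp)
end
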